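/- arXiv:2302.09756 — 7 statements merged into one kernel-verified Lean document; each statement's English description precedes it below -/
import Mathlib

section
/- Under the LATE model, suppose Y ∈ L¹(P) and g₀(1,X), g₀(0,X) ∈ L¹(P). Then for every θ ∈ ℝ the score is P-integrable and E_P[ψ(W; θ, η₀)] = E_P[g₀(1,X) − g₀(0,X)] − θ · E_P[m₀(1,X) − m₀(0,X)]. Consequently, if κ := E_P[m₀(1,X) − m₀(0,X)] ≠ 0 and θ₀ := E_P[g₀(1,X) − g₀(0,X)] / κ (the LATE), then the moment condition E_P[ψ(W; θ₀, η₀)] = 0 holds. -/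
/-!
With `w(z, x) = z / p₀(x) - (1 - z) / (1 - p₀(x))` and `Z ∈ {0, 1}`, each half of the score is
an augmented inverse-probability-weighted term,
`r(1,X) - r(0,X) + w(Z,X) (V - r(Z,X))`, with `(V, r) = (Y, g₀)` or `(D, m₀)`.
Overlap makes `w(Z,X)` bounded, and it is `σ(Z,X)`-measurable, so
`E[w(Z,X) (V - r(Z,X))] = E[w(Z,X) E[V - r(Z,X) | Z,X]] = 0`.
It remains to see that `m₀(z,X)` is integrable: `|m₀(Z,X)| ≤ 1` a.e. because `D ∈ {0,1}`, and
since `P(Z = z | X) > 0`, a bound on `m₀(z,X)` valid a.e. on `{Z = z}` is valid a.e. on `Ω`.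
-/

open MeasureTheory

section CondExp

variable {Ω : Type*} {m mΩ : MeasurableSpace Ω} {μ : Measure Ω} [IsFiniteMeasure μ]

theorem integral_mul_sub_eq_zero_of_condExp_ae_eq (hm : m ≤ mΩ) {f g h : Ω → ℝ} {C : ℝ}
    (hf : Integrable f μ) (hg : μ[f|m] =ᵐ[μ] g) (hh : StronglyMeasurable[m] h)
    (hbd : ∀ᵐ ω ∂μ, ‖h ω‖ ≤ C) :
    ∫ ω, h ω * (f ω - g ω) ∂μ = 0 := by
  have hg_int : Integrable g μ := integrable_condExp.congr hg
  have hfg : Integrable (f - g) μ := hf.sub hg_int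
  have hprod : Integrable (h * (f - g)) μ := hfg.bdd_mul (hh.mono hm).aestronglyMeasurable hbd
  have hg_idem : μ[g|m] =ᵐ[μ] g :=
    (condExp_congr_ae hg.symm).trans ((condExp_condExp_of_le le_rfl hm).trans hg)
  have hcond : μ[h * (f - g)|m] =ᵐ[μ] 0 := by
    filter_upwards [condExp_mul_of_stronglyMeasurable_left hh hprod hfg,
      condExp_sub hf hg_int m, hg_idem, hg] with ω h₁ h₂ h₃ h₄
    simp [h₁, h₂, h₃, h₄]
  calc ∫ ω, h ω * (f ω - g ω) ∂μ = ∫ ω, μ[h * (f - g)|m] ω ∂μ := (integral_condExp hm).symm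
    _ = 0 := by simp [integral_congr_ae hcond]

theorem ae_mem_of_condExp_pos (hm : m ≤ mΩ) {W : Ω → ℝ} (hW : Integrable W μ)
    (hW_nonneg : 0 ≤ᵐ[μ] W) (hpos : ∀ᵐ ω ∂μ, 0 < μ[W|m] ω) {S : Set Ω}
    (hS : MeasurableSet[m] S) (hWS : ∀ᵐ ω ∂μ, W ω ≠ 0 → ω ∈ S) :
    ∀ᵐ ω ∂μ, ω ∈ S := by
  have hW_Sc : ∫ ω in Sᶜ, W ω ∂μ = 0 :=
    setIntegral_eq_zero_of_ae_eq_zero (hWS.mono fun ω h hω => not_not.mp (mt h hω))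
  have hcond_Sc : ∫ ω in Sᶜ, μ[W|m] ω ∂μ = 0 := by rwa [setIntegral_condExp hm hW hS.compl]
  rw [setIntegral_eq_zero_iff_of_nonneg_ae (ae_restrict_of_ae (condExp_nonneg hW_nonneg))
    integrable_condExp.integrableOn] at hcond_Sc
  have hcond_zero := (ae_restrict_iff' (hm _ hS.compl)).mp hcond_Sc
  filter_upwards [hcond_zero, hpos] with ω hzero hpos
  by_contra hω
  exact hpos.ne' (hzero hω)

end CondExp

section LATE

variable {Ω 𝒳 : Type*} {Z : Ω → ℝ} {X : Ω → 𝒳}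

noncomputable def ipwWeight (p : 𝒳 → ℝ) (z : ℝ) (x : 𝒳) : ℝ := z / p x - (1 - z) / (1 - p x)

noncomputable def aipwScore (r : ℝ → 𝒳 → ℝ) (p : 𝒳 → ℝ) (V Z : Ω → ℝ) (X : Ω → 𝒳) (ω : Ω) : ℝ :=
  r 1 (X ω) - r 0 (X ω) + Z ω * (V ω - r 1 (X ω)) / p (X ω)
    - (1 - Z ω) * (V ω - r 0 (X ω)) / (1 - p (X ω))

theorem abs_ipwWeight_le {p : 𝒳 → ℝ} {z ε : ℝ} {x : 𝒳} (hz : z = 0 ∨ z = 1) (hε : 0 < ε)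
    (hpx : ε ≤ p x ∧ p x ≤ 1 - ε) : |ipwWeight p z x| ≤ 1 / ε := by
  rcases hz with rfl | rfl
  · rw [show ipwWeight p 0 x = -(1 / (1 - p x)) by simp [ipwWeight], abs_neg,
      abs_of_pos (by linarith [one_div_pos.mpr (show 0 < 1 - p x by linarith)])]
    exact one_div_le_one_div_of_le hε (by linarith)
  · rw [show ipwWeight p 1 x = 1 / p x by simp [ipwWeight],
      abs_of_pos (one_div_pos.mpr (by linarith))]
    exact one_div_le_one_div_of_le hε hpx.1

theorem aipwScore_eq (r : ℝ → 𝒳 → ℝ) (p : 𝒳 → ℝ) (V : Ω → ℝ)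
    (hZ : ∀ ω, Z ω = 0 ∨ Z ω = 1) (ω : Ω) :
    aipwScore r p V Z X ω
      = r 1 (X ω) - r 0 (X ω) + ipwWeight p (Z ω) (X ω) * (V ω - r (Z ω) (X ω)) := by
  unfold aipwScore ipwWeight
  rcases hZ ω with h | h <;> rw [h] <;> ring

variable [MeasurableSpace 𝒳]

theorem measurable_ipwWeight {p : 𝒳 → ℝ} (hp : Measurable p) :
    Measurable (Function.uncurry (ipwWeight p)) := by
  unfold ipwWeight Function.uncurry
  fun_prop

variable [MeasurableSpace Ω] {P : Measure Ω} [IsProbabilityMeasure P]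

theorem aipwScore_integrable_and_integral_eq (hZm : Measurable Z) (hXm : Measurable X)
    (hZ : ∀ ω, Z ω = 0 ∨ Z ω = 1) {p : 𝒳 → ℝ} (hp : Measurable p) {ε : ℝ} (hε : 0 < ε)
    (hpX : ∀ᵐ ω ∂P, ε ≤ p (X ω) ∧ p (X ω) ≤ 1 - ε) {V : Ω → ℝ} {r : ℝ → 𝒳 → ℝ}
    (hV : Integrable V P)
    (hcV : P[V | MeasurableSpace.comap (fun ω => (Z ω, X ω)) inferInstance]
      =ᵐ[P] fun ω => r (Z ω) (X ω))
    (hr₁ : Integrable (fun ω => r 1 (X ω)) P) (hr₀ : Integrable (fun ω => r 0 (X ω)) P) :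
    Integrable (aipwScore r p V Z X) P ∧
      ∫ ω, aipwScore r p V Z X ω ∂P = ∫ ω, (r 1 (X ω) - r 0 (X ω)) ∂P := by
  set w : Ω → ℝ := fun ω => ipwWeight p (Z ω) (X ω)
  have hw_meas : StronglyMeasurable[MeasurableSpace.comap (fun ω => (Z ω, X ω)) inferInstance] w :=
    ((measurable_ipwWeight hp).comp (comap_measurable _)).stronglyMeasurable
  have hw_bdd : ∀ᵐ ω ∂P, ‖w ω‖ ≤ 1 / ε :=
    hpX.mono fun ω hω => abs_ipwWeight_le (hZ ω) hε hω
  have hrZ : Integrable (fun ω => r (Z ω) (X ω)) P := integrable_condExp.congr hcV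
  have hresid : Integrable (fun ω => w ω * (V ω - r (Z ω) (X ω))) P :=
    (hV.sub hrZ).bdd_mul ((measurable_ipwWeight hp).comp (hZm.prodMk hXm)).aestronglyMeasurable
      hw_bdd
  have hdiff : Integrable (fun ω => r 1 (X ω) - r 0 (X ω)) P := hr₁.sub hr₀
  rw [show aipwScore r p V Z X = _ from funext (aipwScore_eq r p V hZ)]
  refine ⟨hdiff.add hresid, ?_⟩
  rw [integral_add hdiff hresid,
    integral_mul_sub_eq_zero_of_condExp_ae_eq (hZm.prodMk hXm).comap_le hV hcV hw_meas hw_bdd,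
    add_zero]

theorem integrable_comp_of_condExp_pos (hXm : Measurable X) {W : Ω → ℝ} (hW : Integrable W P)
    (hW_nonneg : 0 ≤ᵐ[P] W)
    (hpos : ∀ᵐ ω ∂P, 0 < P[W | MeasurableSpace.comap X inferInstance] ω)
    {f : 𝒳 → ℝ} (hf : Measurable f) {C : ℝ} (hfC : ∀ᵐ ω ∂P, W ω ≠ 0 → |f (X ω)| ≤ C) :
    Integrable (fun ω => f (X ω)) P := by
  refine Integrable.of_bound (hf.comp hXm).aestronglyMeasurable C ?_
  exact ae_mem_of_condExp_pos hXm.comap_le hW hW_nonneg hpos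
    ⟨{x | |f x| ≤ C}, measurableSet_le hf.abs measurable_const, rfl⟩ hfC

theorem integrable_regression_of_overlap (hZm : Measurable Z) (hXm : Measurable X)
    (hZ : ∀ ω, Z ω = 0 ∨ Z ω = 1) {D : Ω → ℝ} (hD : ∀ ω, D ω = 0 ∨ D ω = 1)
    {m₀ : ℝ → 𝒳 → ℝ} (hm₀ : Measurable (Function.uncurry m₀)) {p : 𝒳 → ℝ} {ε : ℝ}
    (hε : 0 < ε) (hpX : ∀ᵐ ω ∂P, ε ≤ p (X ω) ∧ p (X ω) ≤ 1 - ε)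
    (hcD : P[D | MeasurableSpace.comap (fun ω => (Z ω, X ω)) inferInstance]
      =ᵐ[P] fun ω => m₀ (Z ω) (X ω))
    (hcZ : P[Z | MeasurableSpace.comap X inferInstance] =ᵐ[P] fun ω => p (X ω)) :
    Integrable (fun ω => m₀ 1 (X ω)) P ∧ Integrable (fun ω => m₀ 0 (X ω)) P := by
  have hm₀ZX : ∀ᵐ ω ∂P, |m₀ (Z ω) (X ω)| ≤ 1 := by
    filter_upwards [ae_bdd_abs_condExp_of_ae_bdd_abs (m := MeasurableSpace.comap
      (fun ω => (Z ω, X ω)) inferInstance) (μ := P) (R := (1 : ℝ)) (f := D)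
      (ae_of_all _ fun ω => by rcases hD ω with h | h <;> simp [h]), hcD] with ω h h'
    rwa [← h']
  have hZ_int : Integrable Z P :=
    Integrable.of_bound hZm.aestronglyMeasurable 1
      (ae_of_all _ fun ω => by rcases hZ ω with h | h <;> simp [h])
  have hcZc : P[fun ω => 1 - Z ω | MeasurableSpace.comap X inferInstance]
      =ᵐ[P] fun ω => 1 - p (X ω) := by
    filter_upwards [condExp_sub (integrable_const (1 : ℝ)) hZ_int
      (MeasurableSpace.comap X inferInstance), hcZ] with ω h h'
    simp only [Pi.sub_apply] at h
    rw [show (fun ω => 1 - Z ω) = (fun _ => (1 : ℝ)) - Z from rfl, h,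
      condExp_const hXm.comap_le, h']
  have hZ_nonneg : 0 ≤ᵐ[P] Z := ae_of_all _ fun ω => by rcases hZ ω with h | h <;> simp [h]
  have hZc_nonneg : 0 ≤ᵐ[P] fun ω => 1 - Z ω :=
    ae_of_all _ fun ω => by rcases hZ ω with h | h <;> simp [h]
  constructor
  · refine integrable_comp_of_condExp_pos hXm hZ_int hZ_nonneg ?_ hm₀.of_uncurry_left (C := 1) ?_
    · filter_upwards [hcZ, hpX] with ω h h'
      linarith [h'.1]
    · filter_upwards [hm₀ZX] with ω h hω
      rwa [(hZ ω).resolve_left hω] at h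
  · refine integrable_comp_of_condExp_pos hXm (W := fun ω => 1 - Z ω)
      ((integrable_const 1).sub hZ_int) hZc_nonneg ?_ hm₀.of_uncurry_left (C := 1) ?_
    · filter_upwards [hcZc, hpX] with ω h h'
      linarith [h'.2]
    · filter_upwards [hm₀ZX] with ω h hω
      rwa [(hZ ω).resolve_right (by intro h1; simp [h1] at hω)] at h

end LATE

theorem stmt0_general
    {Ω 𝒳 : Type*} [MeasurableSpace Ω] [MeasurableSpace 𝒳]
    (P : Measure Ω) [IsProbabilityMeasure P]
    (Y D Z : Ω → ℝ) (X : Ω → 𝒳)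
    (hDm : Measurable D) (hZm : Measurable Z) (hXm : Measurable X)
    (hDval : ∀ ω, D ω = 0 ∨ D ω = 1) (hZval : ∀ ω, Z ω = 0 ∨ Z ω = 1)
    (g0 m0 : ℝ → 𝒳 → ℝ) (p0 : 𝒳 → ℝ)
    (hm0m : Measurable (Function.uncurry m0))
    (hp0m : Measurable p0)
    (ε : ℝ) (hε : ε ∈ Set.Ioo (0 : ℝ) (1 / 2))
    (hp0bd : ∀ᵐ ω ∂P, ε ≤ p0 (X ω) ∧ p0 (X ω) ≤ 1 - ε)
    -- the true nuisance parameters are the relevant conditional expectations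
    (hcY : P[Y | MeasurableSpace.comap (fun ω => (Z ω, X ω)) inferInstance]
        =ᵐ[P] fun ω => g0 (Z ω) (X ω))
    (hcD : P[D | MeasurableSpace.comap (fun ω => (Z ω, X ω)) inferInstance]
        =ᵐ[P] fun ω => m0 (Z ω) (X ω))
    (hcZ : P[Z | MeasurableSpace.comap X inferInstance] =ᵐ[P] fun ω => p0 (X ω))
    -- integrability hypotheses
    (hYint : Integrable Y P)
    (hg1int : Integrable (fun ω => g0 1 (X ω)) P)
    (hg0int : Integrable (fun ω => g0 0 (X ω)) P)
    -- the AR-type score evaluated at the true nuisance parameter η₀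
    (ψ : ℝ → Ω → ℝ)
    (hψ : ∀ θ ω, ψ θ ω =
      g0 1 (X ω) - g0 0 (X ω)
        + Z ω * (Y ω - g0 1 (X ω)) / p0 (X ω)
        - (1 - Z ω) * (Y ω - g0 0 (X ω)) / (1 - p0 (X ω))
        - θ * (m0 1 (X ω) - m0 0 (X ω)
            + Z ω * (D ω - m0 1 (X ω)) / p0 (X ω)
            - (1 - Z ω) * (D ω - m0 0 (X ω)) / (1 - p0 (X ω)))) :
    (∀ θ : ℝ, Integrable (ψ θ) P ∧
      ∫ ω, ψ θ ω ∂P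
        = (∫ ω, (g0 1 (X ω) - g0 0 (X ω)) ∂P)
            - θ * ∫ ω, (m0 1 (X ω) - m0 0 (X ω)) ∂P) ∧
    (∀ κ θ0 : ℝ, κ = ∫ ω, (m0 1 (X ω) - m0 0 (X ω)) ∂P → κ ≠ 0 →
      θ0 = (∫ ω, (g0 1 (X ω) - g0 0 (X ω)) ∂P) / κ →
      ∫ ω, ψ θ0 ω ∂P = 0) := by
  obtain ⟨hε, -⟩ := hε
  have hDint : Integrable D P := Integrable.of_bound hDm.aestronglyMeasurable 1
    (ae_of_all _ fun ω => by rcases hDval ω with h | h <;> simp [h])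
  obtain ⟨hm1int, hm0int⟩ :=
    integrable_regression_of_overlap hZm hXm hZval hDval hm0m hε hp0bd hcD hcZ
  obtain ⟨hY_score, hY_mean⟩ := aipwScore_integrable_and_integral_eq hZm hXm hZval hp0m hε
    hp0bd hYint hcY hg1int hg0int
  obtain ⟨hD_score, hD_mean⟩ := aipwScore_integrable_and_integral_eq hZm hXm hZval hp0m hε
    hp0bd hDint hcD hm1int hm0int
  have hψ_eq : ∀ θ, ψ θ = fun ω => aipwScore g0 p0 Y Z X ω - θ * aipwScore m0 p0 D Z X ω :=
    fun θ => funext (hψ θ)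
  have hmain : ∀ θ : ℝ, Integrable (ψ θ) P ∧
      ∫ ω, ψ θ ω ∂P = (∫ ω, (g0 1 (X ω) - g0 0 (X ω)) ∂P)
        - θ * ∫ ω, (m0 1 (X ω) - m0 0 (X ω)) ∂P := fun θ => by
    rw [hψ_eq, integral_sub hY_score (hD_score.const_mul θ), integral_const_mul, hY_mean, hD_mean]
    exact ⟨hY_score.sub (hD_score.const_mul θ), rfl⟩
  refine ⟨hmain, fun κ θ0 hκ hκ0 hθ0 => ?_⟩
  rw [(hmain θ0).2, hθ0, ← hκ]
  field_simp
  ring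

/-- Under the LATE model, if `Y ∈ L¹(P)` and `g₀(1,X), g₀(0,X) ∈ L¹(P)`, then
for every `θ ∈ ℝ` the AR-type score `ψ(W; θ, η₀)` is `P`-integrable with
`E_P[ψ(W; θ, η₀)] = E_P[g₀(1,X) − g₀(0,X)] − θ · E_P[m₀(1,X) − m₀(0,X)]`; consequently,
if `κ := E_P[m₀(1,X) − m₀(0,X)] ≠ 0` and `θ₀ := E_P[g₀(1,X) − g₀(0,X)] / κ` (the LATE),
then the moment condition `E_P[ψ(W; θ₀, η₀)] = 0` holds. -/
theorem stmt0
    {Ω 𝒳 : Type*} [MeasurableSpace Ω] [MeasurableSpace 𝒳]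
    (P : Measure Ω) [IsProbabilityMeasure P]
    (Y D Z : Ω → ℝ) (X : Ω → 𝒳)
    (hYm : Measurable Y) (hDm : Measurable D) (hZm : Measurable Z) (hXm : Measurable X)
    (hDval : ∀ ω, D ω = 0 ∨ D ω = 1) (hZval : ∀ ω, Z ω = 0 ∨ Z ω = 1)
    (g0 m0 : ℝ → 𝒳 → ℝ) (p0 : 𝒳 → ℝ)
    (hg0m : Measurable (Function.uncurry g0)) (hm0m : Measurable (Function.uncurry m0))
    (hp0m : Measurable p0)
    (hp0val : ∀ x, 0 < p0 x ∧ p0 x < 1)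
    (ε : ℝ) (hε : ε ∈ Set.Ioo (0 : ℝ) (1 / 2))
    (hp0bd : ∀ᵐ ω ∂P, ε ≤ p0 (X ω) ∧ p0 (X ω) ≤ 1 - ε)
    -- the true nuisance parameters are the relevant conditional expectations
    (hcY : P[Y | MeasurableSpace.comap (fun ω => (Z ω, X ω)) inferInstance]
        =ᵐ[P] fun ω => g0 (Z ω) (X ω))
    (hcD : P[D | MeasurableSpace.comap (fun ω => (Z ω, X ω)) inferInstance]
        =ᵐ[P] fun ω => m0 (Z ω) (X ω))
    (hcZ : P[Z | MeasurableSpace.comap X inferInstance] =ᵐ[P] fun ω => p0 (X ω))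
    -- integrability hypotheses
    (hYint : Integrable Y P)
    (hg1int : Integrable (fun ω => g0 1 (X ω)) P)
    (hg0int : Integrable (fun ω => g0 0 (X ω)) P)
    -- the AR-type score evaluated at the true nuisance parameter η₀
    (ψ : ℝ → Ω → ℝ)
    (hψ : ∀ θ ω, ψ θ ω =
      g0 1 (X ω) - g0 0 (X ω)
        + Z ω * (Y ω - g0 1 (X ω)) / p0 (X ω)
        - (1 - Z ω) * (Y ω - g0 0 (X ω)) / (1 - p0 (X ω))
        - θ * (m0 1 (X ω) - m0 0 (X ω)
            + Z ω * (D ω - m0 1 (X ω)) / p0 (X ω)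
            - (1 - Z ω) * (D ω - m0 0 (X ω)) / (1 - p0 (X ω)))) :
    (∀ θ : ℝ, Integrable (ψ θ) P ∧
      ∫ ω, ψ θ ω ∂P
        = (∫ ω, (g0 1 (X ω) - g0 0 (X ω)) ∂P)
            - θ * ∫ ω, (m0 1 (X ω) - m0 0 (X ω)) ∂P) ∧
    (∀ κ θ0 : ℝ, κ = ∫ ω, (m0 1 (X ω) - m0 0 (X ω)) ∂P → κ ≠ 0 →
      θ0 = (∫ ω, (g0 1 (X ω) - g0 0 (X ω)) ∂P) / κ →
      ∫ ω, ψ θ0 ω ∂P = 0) :=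
  stmt0_general P Y D Z X hDm hZm hXm hDval hZval g0 m0 p0 hm0m hp0m ε hε hp0bd hcY hcD hcZ hYint
    hg1int hg0int ψ hψ
end

section
/- (Neyman orthogonality of the AR-type LATE score.) Fix θ₀ ∈ ℝ. Let η = (g, m, p) be a nuisance parameter with ε ≤ p(X) ≤ 1 − ε a.s., and suppose Y ∈ L²(P), g₀(1,X), g₀(0,X) ∈ L²(P), and g(z,X) − g₀(z,X), m(z,X) − m₀(z,X) (for z ∈ {0,1}) and p(X) − p₀(X) all lie in L²(P). Then the map r ↦ E_P[ψ(W; θ₀, η₀ + r(η − η₀))], defined for r ∈ [0,1), is differentiable at r = 0 with derivative equal to 0; that is, the Gateaux derivative ∂_η E_P[ψ(W; θ₀, η₀)][η − η₀] vanishes. -/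
/-!
Along the path `π_r = p₀ + r (p - p₀)`, and using `Z ∈ {0, 1}`, the perturbed score is a function
of `X` alone that does not depend on `r`, plus a remainder. In the remainder the inverse-propensity
weights multiply the residual `(Y - g₀(Z, X)) - θ (D - m₀(Z, X))`, whose conditional mean given
`(Z, X)` vanishes, and the contrasts `c_z = (g - g₀)(z, X) - θ (m - m₀)(z, X)`, with weights
`1 - Z / π_r` and `1 - (1 - Z) / (1 - π_r)`. Conditioning on `X` replaces `Z` by `p₀(X)`, turning
these weights into `(π_r - p₀) / π_r` and `(p₀ - π_r) / (1 - π_r)`, both `O(r)` and multiplied by `r`.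
So the expectation moves by `O(r²)` and the derivative at `0` vanishes.
-/

open MeasureTheory Set Filter Topology

theorem abs_div_le_inv_of_abs_le_one {z π ε : ℝ} (hz : |z| ≤ 1) (hε : 0 < ε) (hπ : ε ≤ π) :
    |z / π| ≤ ε⁻¹ := by
  rw [abs_div, abs_of_pos (hε.trans_le hπ), div_le_iff₀ (hε.trans_le hπ)]
  calc |z| ≤ 1 := hz
    _ = ε⁻¹ * ε := (inv_mul_cancel₀ hε.ne').symm
    _ ≤ ε⁻¹ * π := by gcongr

theorem add_mul_sub_mem_Icc_and_abs_sub_le {a b ε r : ℝ} (hε : 0 ≤ ε) (ha : a ∈ Icc ε (1 - ε))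
    (hb : b ∈ Icc ε (1 - ε)) (hr : r ∈ Icc 0 1) :
    a + r * (b - a) ∈ Icc ε (1 - ε) ∧ |a + r * (b - a) - a| ≤ |r| := by
  refine ⟨(convex_Icc ε (1 - ε)).add_smul_sub_mem ha hb hr, ?_⟩
  rw [add_sub_cancel_left, abs_mul]
  refine mul_le_of_le_one_right (abs_nonneg r) (abs_sub_le_iff.mpr ⟨?_, ?_⟩) <;>
    linarith [ha.1, ha.2, hb.1, hb.2]

theorem hasDerivWithinAt_zero_of_abs_sub_le_sq {F : ℝ → ℝ} {s : Set ℝ} {M : ℝ}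
    (h : ∀ r ∈ s, |F r - F 0| ≤ M * r ^ 2) : HasDerivWithinAt F 0 s 0 := by
  rw [hasDerivWithinAt_iff_isLittleO]
  simp only [sub_zero, smul_zero]
  have hO : (fun r => F r - F 0) =O[𝓝[s] 0] fun r => r ^ 2 :=
    .of_bound M <| eventually_nhdsWithin_of_forall fun r hr => by
      simpa [Real.norm_eq_abs] using h r hr
  exact hO.trans_isLittleO ((Asymptotics.isLittleO_pow_id one_lt_two).mono nhdsWithin_le_nhds)

section Integrals

variable {Ω β : Type*} [MeasurableSpace Ω] [mβ : MeasurableSpace β] {μ : Measure Ω}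

theorem abs_integral_add_sub_integral_add_le {a h₁ h₂ : Ω → ℝ} (h₁i : Integrable h₁ μ)
    (h₂i : Integrable h₂ μ) :
    |∫ ω, a ω + h₁ ω ∂μ - ∫ ω, a ω + h₂ ω ∂μ| ≤ |∫ ω, h₁ ω ∂μ| + |∫ ω, h₂ ω ∂μ| := by
  by_cases ha : Integrable a μ
  · rw [integral_add ha h₁i, integral_add ha h₂i, add_sub_add_left_eq_sub]
    exact abs_sub _ _
  · -- `a + hᵢ` is not integrable either, so both integrals are the junk value `0`
    have hnot : ∀ {h : Ω → ℝ}, Integrable h μ → ¬ Integrable (fun ω => a ω + h ω) μ :=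
      fun hi hai => ha ((hai.sub hi).congr (.of_forall fun ω => by simp))
    rw [integral_undef (hnot h₁i), integral_undef (hnot h₂i), sub_zero, abs_zero]
    positivity

variable [IsFiniteMeasure μ] {V : Ω → β}

theorem integral_comp_mul_eq_of_condExp_comap (hV : Measurable V) {f : β → ℝ}
    (hf : Measurable f) {g h : Ω → ℝ} (hg : Integrable g μ)
    (hfg : Integrable (fun ω => f (V ω) * g ω) μ) (hgh : μ[g | mβ.comap V] =ᵐ[μ] h) :
    ∫ ω, f (V ω) * g ω ∂μ = ∫ ω, f (V ω) * h ω ∂μ := by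
  have hfV : StronglyMeasurable[mβ.comap V] fun ω => f (V ω) :=
    (hf.comp (Measurable.of_comap_le le_rfl)).stronglyMeasurable
  calc ∫ ω, f (V ω) * g ω ∂μ = ∫ ω, μ[(fun ω => f (V ω)) * g | mβ.comap V] ω ∂μ :=
        (integral_condExp hV.comap_le).symm
    _ = ∫ ω, f (V ω) * h ω ∂μ := integral_congr_ae <| by
        filter_upwards [condExp_mul_of_stronglyMeasurable_left hfV hfg hg, hgh] with ω h₁ h₂
        rw [h₁, Pi.mul_apply, h₂]

theorem condExp_sub_comp_ae_eq_zero (hV : Measurable V) {G : β → ℝ} (hG : Measurable G)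
    {Y : Ω → ℝ} (hY : Integrable Y μ) (hc : μ[Y | mβ.comap V] =ᵐ[μ] fun ω => G (V ω)) :
    μ[fun ω => Y ω - G (V ω) | mβ.comap V] =ᵐ[μ] 0 := by
  have hGi : Integrable (fun ω => G (V ω)) μ := integrable_condExp.congr hc
  have hGV : μ[fun ω => G (V ω) | mβ.comap V] = fun ω => G (V ω) :=
    condExp_of_stronglyMeasurable hV.comap_le
      (hG.comp (Measurable.of_comap_le le_rfl)).stronglyMeasurable hGi
  refine (condExp_sub hY hGi _).trans ?_
  filter_upwards [hc] with ω hω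
  rw [hGV, Pi.sub_apply, hω, sub_self, Pi.zero_apply]

theorem integrable_and_condExp_residual_ae_eq_zero (hV : Measurable V) {G M : β → ℝ}
    (hG : Measurable G) (hM : Measurable M) {Y D : Ω → ℝ} (hY : Integrable Y μ)
    (hD : Integrable D μ) (hcY : μ[Y | mβ.comap V] =ᵐ[μ] fun ω => G (V ω))
    (hcD : μ[D | mβ.comap V] =ᵐ[μ] fun ω => M (V ω)) (θ : ℝ) :
    Integrable (fun ω => (Y ω - G (V ω)) - θ * (D ω - M (V ω))) μ ∧
      μ[fun ω => (Y ω - G (V ω)) - θ * (D ω - M (V ω)) | mβ.comap V] =ᵐ[μ] 0 := by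
  have hYG : Integrable (fun ω => Y ω - G (V ω)) μ := hY.sub (integrable_condExp.congr hcY)
  have hDM : Integrable (fun ω => D ω - M (V ω)) μ := hD.sub (integrable_condExp.congr hcD)
  refine ⟨hYG.sub (hDM.const_mul θ), (condExp_sub hYG (hDM.const_mul θ) _).trans ?_⟩
  filter_upwards [condExp_sub_comp_ae_eq_zero hV hG hY hcY,
    condExp_sub_comp_ae_eq_zero hV hM hD hcD,
    condExp_smul (μ := μ) θ (fun ω => D ω - M (V ω)) (mβ.comap V)] with ω h₁ h₂ h₃
  simp only [Pi.sub_apply, Pi.zero_apply, h₁]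
  have h₄ : μ[fun ω => θ * (D ω - M (V ω)) | mβ.comap V] ω = 0 :=
    h₃.trans (by simp [h₂])
  rw [h₄, sub_zero]

theorem abs_integral_one_sub_div_mul_le (hV : Measurable V) {W : Ω → ℝ} (hWm : Measurable W)
    (hW : ∀ ω, |W ω| ≤ 1) {w π c : β → ℝ} (hπm : Measurable π) (hcm : Measurable c)
    (hWw : μ[W | mβ.comap V] =ᵐ[μ] fun ω => w (V ω)) {ε δ : ℝ} (hε : 0 < ε)
    (hπ : ∀ᵐ ω ∂μ, ε ≤ π (V ω)) (hπw : ∀ᵐ ω ∂μ, |π (V ω) - w (V ω)| ≤ δ)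
    (hc : Integrable (fun ω => c (V ω)) μ) :
    |∫ ω, (1 - W ω / π (V ω)) * c (V ω) ∂μ| ≤ δ / ε * ∫ ω, |c (V ω)| ∂μ := by
  have hw : ∀ᵐ ω ∂μ, |w (V ω)| ≤ 1 := by
    filter_upwards [ae_bdd_abs_condExp_of_ae_bdd_abs (m := mβ.comap V) (R := (1 : ℝ))
      (.of_forall hW), hWw] with ω h₁ h₂
    rwa [← h₂]
  have hcπ : ∀ {v : Ω → ℝ}, AEStronglyMeasurable v μ → (∀ᵐ ω ∂μ, |v ω| ≤ 1) →
      Integrable (fun ω => c (V ω) / π (V ω) * v ω) μ := fun {v} hv hv1 =>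
    (hc.abs.const_mul ε⁻¹).mono' ((((hcm.div hπm).comp hV).aestronglyMeasurable).mul hv) <| by
      filter_upwards [hπ, hv1] with ω h₁ h₂
      rw [Real.norm_eq_abs, abs_mul, abs_div, abs_of_pos (hε.trans_le h₁)]
      calc |c (V ω)| / π (V ω) * |v ω| ≤ |c (V ω)| / ε * 1 := by gcongr
        _ = ε⁻¹ * |c (V ω)| := by ring
  have hWi : Integrable W μ :=
    (integrable_const 1).mono' hWm.aestronglyMeasurable (.of_forall hW)
  have hcW := hcπ hWm.aestronglyMeasurable (.of_forall hW)
  have hcw := hcπ (integrable_condExp.congr hWw).aestronglyMeasurable hw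
  calc |∫ ω, (1 - W ω / π (V ω)) * c (V ω) ∂μ|
      = |∫ ω, c (V ω) ∂μ - ∫ ω, c (V ω) / π (V ω) * W ω ∂μ| := by
        rw [← integral_sub hc hcW]
        congr 1
        exact integral_congr_ae (.of_forall fun ω => by ring)
    _ = |∫ ω, c (V ω) ∂μ - ∫ ω, c (V ω) / π (V ω) * w (V ω) ∂μ| := by
        rw [integral_comp_mul_eq_of_condExp_comap hV (f := fun x => c x / π x) (hcm.div hπm)
          hWi hcW hWw]
    _ = |∫ ω, (π (V ω) - w (V ω)) / π (V ω) * c (V ω) ∂μ| := by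
        rw [← integral_sub hc hcw]
        congr 1
        refine integral_congr_ae ?_
        filter_upwards [hπ] with ω h
        have : π (V ω) ≠ 0 := (hε.trans_le h).ne'
        field_simp
    _ ≤ ∫ ω, δ / ε * |c (V ω)| ∂μ := by
        rw [← Real.norm_eq_abs]
        refine norm_integral_le_of_norm_le (hc.abs.const_mul _) ?_
        filter_upwards [hπ, hπw] with ω h₁ h₂
        rw [Real.norm_eq_abs, abs_mul, abs_div, abs_of_pos (hε.trans_le h₁)]
        exact mul_le_mul_of_nonneg_right (div_le_div₀ ((abs_nonneg _).trans h₂) h₂ hε h₁)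
          (abs_nonneg _)
    _ = δ / ε * ∫ ω, |c (V ω)| ∂μ := integral_const_mul _ _

end Integrals

theorem ae_abs_ipw_weights_le {Ω 𝒳 : Type*} [MeasurableSpace Ω] {P : Measure Ω} {X : Ω → 𝒳}
    {Z : Ω → ℝ} {π : 𝒳 → ℝ} {ε : ℝ} (hZ : ∀ ω, Z ω ∈ Icc 0 1) (hε : 0 < ε)
    (hπ : ∀ᵐ ω ∂P, π (X ω) ∈ Icc ε (1 - ε)) :
    ∀ᵐ ω ∂P, |Z ω / π (X ω)| ≤ ε⁻¹ ∧ |(1 - Z ω) / (1 - π (X ω))| ≤ ε⁻¹ := by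
  filter_upwards [hπ] with ω h
  obtain ⟨hz₀, hz₁⟩ := hZ ω
  exact ⟨abs_div_le_inv_of_abs_le_one (abs_le.2 ⟨by linarith, hz₁⟩) hε h.1,
    abs_div_le_inv_of_abs_le_one (abs_le.2 ⟨by linarith, by linarith⟩) hε (by linarith [h.2])⟩

noncomputable def scoreRemainder {Ω : Type*} (Z U π c₁ c₀ : Ω → ℝ) (r : ℝ) (ω : Ω) : ℝ :=
  (Z ω / π ω - (1 - Z ω) / (1 - π ω)) * U ω + r * ((1 - Z ω / π ω) * c₁ ω)
    - r * ((1 - (1 - Z ω) / (1 - π ω)) * c₀ ω)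

section Remainder

variable {Ω 𝒳 : Type*} [MeasurableSpace Ω] [m𝒳 : MeasurableSpace 𝒳] {P : Measure Ω}
  {X : Ω → 𝒳} {Z U : Ω → ℝ} {π c₁ c₀ : 𝒳 → ℝ} {ε : ℝ}

theorem integrable_scoreRemainder_terms (hX : Measurable X) (hZm : Measurable Z)
    (hZ : ∀ ω, Z ω ∈ Icc 0 1) (hπm : Measurable π) (hε : 0 < ε)
    (hπ : ∀ᵐ ω ∂P, π (X ω) ∈ Icc ε (1 - ε)) (hU : Integrable U P)
    (hc₁ : Integrable (fun ω => c₁ (X ω)) P) (hc₀ : Integrable (fun ω => c₀ (X ω)) P) :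
    Integrable (fun ω => (Z ω / π (X ω) - (1 - Z ω) / (1 - π (X ω))) * U ω) P ∧
      Integrable (fun ω => (1 - Z ω / π (X ω)) * c₁ (X ω)) P ∧
      Integrable (fun ω => (1 - (1 - Z ω) / (1 - π (X ω))) * c₀ (X ω)) P := by
  have hw := ae_abs_ipw_weights_le hZ hε hπ
  refine ⟨hU.bdd_mul (c := ε⁻¹ + ε⁻¹) (by fun_prop : Measurable _).aestronglyMeasurable ?_,
    hc₁.bdd_mul (c := 1 + ε⁻¹) (by fun_prop : Measurable _).aestronglyMeasurable ?_,
    hc₀.bdd_mul (c := 1 + ε⁻¹) (by fun_prop : Measurable _).aestronglyMeasurable ?_⟩ <;>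
  filter_upwards [hw] with ω h <;> rw [Real.norm_eq_abs]
  · exact (abs_sub _ _).trans (add_le_add h.1 h.2)
  · exact (abs_sub _ _).trans (by rw [abs_one]; linarith [h.1])
  · exact (abs_sub _ _).trans (by rw [abs_one]; linarith [h.2])

theorem integrable_and_abs_integral_scoreRemainder_le [IsFiniteMeasure P] (hX : Measurable X)
    (hZm : Measurable Z) (hZ : ∀ ω, Z ω ∈ Icc 0 1) {p₀ : 𝒳 → ℝ}
    (hcZ : P[Z | m𝒳.comap X] =ᵐ[P] fun ω => p₀ (X ω)) (hπm : Measurable π)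
    (hc₁m : Measurable c₁) (hc₀m : Measurable c₀) (hε : 0 < ε)
    (hπ : ∀ᵐ ω ∂P, π (X ω) ∈ Icc ε (1 - ε)) {δ : ℝ}
    (hπp : ∀ᵐ ω ∂P, |π (X ω) - p₀ (X ω)| ≤ δ) (hU : Integrable U P)
    (hUc : P[U | MeasurableSpace.comap (fun ω => (Z ω, X ω)) inferInstance] =ᵐ[P] 0)
    (hc₁ : Integrable (fun ω => c₁ (X ω)) P) (hc₀ : Integrable (fun ω => c₀ (X ω)) P) (r : ℝ) :
    Integrable (scoreRemainder Z U (fun ω => π (X ω)) (fun ω => c₁ (X ω))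
        (fun ω => c₀ (X ω)) r) P ∧
      |∫ ω, scoreRemainder Z U (fun ω => π (X ω)) (fun ω => c₁ (X ω)) (fun ω => c₀ (X ω)) r ω ∂P|
        ≤ |r| * (δ / ε * (∫ ω, |c₁ (X ω)| ∂P + ∫ ω, |c₀ (X ω)| ∂P)) := by
  obtain ⟨hφU, hA₁, hA₀⟩ := integrable_scoreRemainder_terms hX hZm hZ hπm hε hπ hU hc₁ hc₀
  have hZ₁ : ∀ ω, |Z ω| ≤ 1 := fun ω => abs_le.2 ⟨by linarith [(hZ ω).1], (hZ ω).2⟩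
  have hZ₀ : ∀ ω, |1 - Z ω| ≤ 1 := fun ω =>
    abs_le.2 ⟨by linarith [(hZ ω).2], by linarith [(hZ ω).1]⟩
  have hZi : Integrable Z P := (integrable_const 1).mono' hZm.aestronglyMeasurable (.of_forall hZ₁)
  have hcZ' : P[fun ω => 1 - Z ω | m𝒳.comap X] =ᵐ[P] fun ω => 1 - p₀ (X ω) := by
    refine (condExp_sub (integrable_const 1) hZi _).trans ?_
    filter_upwards [hcZ] with ω h
    rw [Pi.sub_apply, condExp_const hX.comap_le, h]
  have hφ : ∫ ω, (Z ω / π (X ω) - (1 - Z ω) / (1 - π (X ω))) * U ω ∂P = 0 := by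
    simpa using integral_comp_mul_eq_of_condExp_comap (hZm.prodMk hX)
      (f := fun zx : ℝ × 𝒳 => zx.1 / π zx.2 - (1 - zx.1) / (1 - π zx.2)) (by fun_prop) hU hφU hUc
  have h₁ := abs_integral_one_sub_div_mul_le hX hZm hZ₁ hπm hc₁m hcZ hε
    (hπ.mono fun ω h => h.1) hπp hc₁
  have h₀ := abs_integral_one_sub_div_mul_le hX (measurable_const.sub hZm) hZ₀
    (W := fun ω => 1 - Z ω) (π := fun x => 1 - π x) (w := fun x => 1 - p₀ x)
    (measurable_const.sub hπm) hc₀m hcZ' hε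
    (hπ.mono fun ω h => by linarith [h.2])
    (hπp.mono fun ω h => by rwa [sub_sub_sub_cancel_left, abs_sub_comm]) hc₀
  have hsplit : ∫ ω, scoreRemainder Z U (fun ω => π (X ω)) (fun ω => c₁ (X ω))
      (fun ω => c₀ (X ω)) r ω ∂P
      = ∫ ω, (Z ω / π (X ω) - (1 - Z ω) / (1 - π (X ω))) * U ω ∂P
        + r * ∫ ω, (1 - Z ω / π (X ω)) * c₁ (X ω) ∂P
        - r * ∫ ω, (1 - (1 - Z ω) / (1 - π (X ω))) * c₀ (X ω) ∂P := by
    have hφUA₁ : Integrable (fun ω => (Z ω / π (X ω) - (1 - Z ω) / (1 - π (X ω))) * U ω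
        + r * ((1 - Z ω / π (X ω)) * c₁ (X ω))) P := hφU.add (hA₁.const_mul r)
    simp only [scoreRemainder]
    rw [integral_sub hφUA₁ (hA₀.const_mul r), integral_add hφU (hA₁.const_mul r),
      integral_const_mul, integral_const_mul]
  refine ⟨(hφU.add (hA₁.const_mul r)).sub (hA₀.const_mul r), ?_⟩
  rw [hsplit, hφ, zero_add]
  calc _ ≤ |r| * |∫ ω, (1 - Z ω / π (X ω)) * c₁ (X ω) ∂P|
        + |r| * |∫ ω, (1 - (1 - Z ω) / (1 - π (X ω))) * c₀ (X ω) ∂P| := by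
        rw [← abs_mul, ← abs_mul]; exact abs_sub _ _
    _ ≤ |r| * (δ / ε * ∫ ω, |c₁ (X ω)| ∂P) + |r| * (δ / ε * ∫ ω, |c₀ (X ω)| ∂P) := by
        gcongr
    _ = _ := by ring

end Remainder

theorem arScore_eq_add_scoreRemainder {z : ℝ} (hz : z = 0 ∨ z = 1) (G M : ℝ → ℝ)
    (y d g₁ g₀ m₁ m₀ π θ r : ℝ) :
    (G 1 + r * (g₁ - G 1)) - (G 0 + r * (g₀ - G 0))
      + z * (y - (G 1 + r * (g₁ - G 1))) / π
      - (1 - z) * (y - (G 0 + r * (g₀ - G 0))) / (1 - π)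
      - θ * ((M 1 + r * (m₁ - M 1)) - (M 0 + r * (m₀ - M 0))
        + z * (d - (M 1 + r * (m₁ - M 1))) / π
        - (1 - z) * (d - (M 0 + r * (m₀ - M 0))) / (1 - π))
    = (G 1 - G 0 - θ * (M 1 - M 0))
      + ((z / π - (1 - z) / (1 - π)) * ((y - G z) - θ * (d - M z))
        + r * ((1 - z / π) * (g₁ - G 1 - θ * (m₁ - M 1)))
        - r * ((1 - (1 - z) / (1 - π)) * (g₀ - G 0 - θ * (m₀ - M 0)))) := by
  rcases hz with rfl | rfl <;> ring

theorem stmt2_general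
    {Ω 𝒳 : Type*} [MeasurableSpace Ω] [MeasurableSpace 𝒳]
    (P : Measure Ω) [IsProbabilityMeasure P]
    (Y D Z : Ω → ℝ) (X : Ω → 𝒳)
    (hDm : Measurable D) (hZm : Measurable Z) (hXm : Measurable X)
    (hDval : ∀ ω, D ω = 0 ∨ D ω = 1) (hZval : ∀ ω, Z ω = 0 ∨ Z ω = 1)
    -- the true nuisance parameter η₀ = (g₀, m₀, p₀)
    (g0 m0 : ℝ → 𝒳 → ℝ) (p0 : 𝒳 → ℝ)
    (hg0m : Measurable (Function.uncurry g0)) (hm0m : Measurable (Function.uncurry m0))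
    (hp0m : Measurable p0)
    (hcY : P[Y | MeasurableSpace.comap (fun ω => (Z ω, X ω)) inferInstance]
        =ᵐ[P] fun ω => g0 (Z ω) (X ω))
    (hcD : P[D | MeasurableSpace.comap (fun ω => (Z ω, X ω)) inferInstance]
        =ᵐ[P] fun ω => m0 (Z ω) (X ω))
    (hcZ : P[Z | MeasurableSpace.comap X inferInstance] =ᵐ[P] fun ω => p0 (X ω))
    (ε : ℝ) (hε : ε ∈ Set.Ioo (0 : ℝ) (1 / 2))
    (hp0bd : ∀ᵐ ω ∂P, ε ≤ p0 (X ω) ∧ p0 (X ω) ≤ 1 - ε)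
    -- the perturbation direction nuisance parameter η = (g, m, p)
    (g m : ℝ → 𝒳 → ℝ) (p : 𝒳 → ℝ)
    (hgm : Measurable (Function.uncurry g)) (hmm : Measurable (Function.uncurry m))
    (hpm : Measurable p)
    (hpbd : ∀ᵐ ω ∂P, ε ≤ p (X ω) ∧ p (X ω) ≤ 1 - ε)
    -- square-integrability hypotheses
    (θ0 : ℝ)
    (hY2 : MemLp Y 2 P)
    (hgd1 : MemLp (fun ω => g 1 (X ω) - g0 1 (X ω)) 2 P)
    (hgd0 : MemLp (fun ω => g 0 (X ω) - g0 0 (X ω)) 2 P)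
    (hmd1 : MemLp (fun ω => m 1 (X ω) - m0 1 (X ω)) 2 P)
    (hmd0 : MemLp (fun ω => m 0 (X ω) - m0 0 (X ω)) 2 P)
    -- the map r ↦ E_P[ψ(W; θ₀, η₀ + r(η − η₀))]
    (F : ℝ → ℝ)
    (hF : ∀ r, F r =
      ∫ ω,
        ((g0 1 (X ω) + r * (g 1 (X ω) - g0 1 (X ω)))
          - (g0 0 (X ω) + r * (g 0 (X ω) - g0 0 (X ω)))
          + Z ω * (Y ω - (g0 1 (X ω) + r * (g 1 (X ω) - g0 1 (X ω))))
              / (p0 (X ω) + r * (p (X ω) - p0 (X ω)))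
          - (1 - Z ω) * (Y ω - (g0 0 (X ω) + r * (g 0 (X ω) - g0 0 (X ω))))
              / (1 - (p0 (X ω) + r * (p (X ω) - p0 (X ω))))
          - θ0 * ((m0 1 (X ω) + r * (m 1 (X ω) - m0 1 (X ω)))
              - (m0 0 (X ω) + r * (m 0 (X ω) - m0 0 (X ω)))
              + Z ω * (D ω - (m0 1 (X ω) + r * (m 1 (X ω) - m0 1 (X ω))))
                  / (p0 (X ω) + r * (p (X ω) - p0 (X ω)))
              - (1 - Z ω) * (D ω - (m0 0 (X ω) + r * (m 0 (X ω) - m0 0 (X ω))))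
                  / (1 - (p0 (X ω) + r * (p (X ω) - p0 (X ω)))))) ∂P) :
    HasDerivWithinAt F 0 (Set.Ico (0 : ℝ) 1) 0 := by
  obtain ⟨hε0, -⟩ := hε
  set c₁ : 𝒳 → ℝ := fun x => g 1 x - g0 1 x - θ0 * (m 1 x - m0 1 x)
  set c₀ : 𝒳 → ℝ := fun x => g 0 x - g0 0 x - θ0 * (m 0 x - m0 0 x)
  set U : Ω → ℝ := fun ω => (Y ω - g0 (Z ω) (X ω)) - θ0 * (D ω - m0 (Z ω) (X ω))
  set π : ℝ → 𝒳 → ℝ := fun r x => p0 x + r * (p x - p0 x)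
  set H : ℝ → Ω → ℝ := fun r =>
    scoreRemainder Z U (fun ω => π r (X ω)) (fun ω => c₁ (X ω)) (fun ω => c₀ (X ω)) r
  have hFH : ∀ r, F r = ∫ ω, (g0 1 (X ω) - g0 0 (X ω) - θ0 * (m0 1 (X ω) - m0 0 (X ω)))
      + H r ω ∂P := fun r => by
    rw [hF]
    exact integral_congr_ae (.of_forall fun ω => arScore_eq_add_scoreRemainder (hZval ω)
      (fun z => g0 z (X ω)) (fun z => m0 z (X ω)) _ _ _ _ _ _ _ _ _)
  have hZ : ∀ ω, Z ω ∈ Icc 0 1 := fun ω => by rcases hZval ω with h | h <;> simp [h]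
  have hYi : Integrable Y P := hY2.integrable one_le_two
  have hDi : Integrable D P := (integrable_const 1).mono' hDm.aestronglyMeasurable
    (.of_forall fun ω => by rcases hDval ω with h | h <;> simp [h])
  obtain ⟨hU, hUc⟩ : Integrable U P ∧ _ := integrable_and_condExp_residual_ae_eq_zero
    (hZm.prodMk hXm) hg0m hm0m hYi hDi hcY hcD θ0
  have hc₁ : Integrable (fun ω => c₁ (X ω)) P :=
    (hgd1.integrable one_le_two).sub ((hmd1.integrable one_le_two).const_mul θ0)
  have hc₀ : Integrable (fun ω => c₀ (X ω)) P :=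
    (hgd0.integrable one_le_two).sub ((hmd0.integrable one_le_two).const_mul θ0)
  have hpath : ∀ r ∈ Icc (0 : ℝ) 1, ∀ᵐ ω ∂P,
      π r (X ω) ∈ Icc ε (1 - ε) ∧ |π r (X ω) - p0 (X ω)| ≤ |r| := fun r hr => by
    filter_upwards [hp0bd, hpbd] with ω h₀ h₁
    exact add_mul_sub_mem_Icc_and_abs_sub_le hε0.le h₀ h₁ hr
  have key : ∀ r ∈ Icc (0 : ℝ) 1, Integrable (H r) P ∧ |∫ ω, H r ω ∂P|
      ≤ |r| * (|r| / ε * (∫ ω, |c₁ (X ω)| ∂P + ∫ ω, |c₀ (X ω)| ∂P)) := fun r hr =>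
    integrable_and_abs_integral_scoreRemainder_le hXm hZm hZ hcZ (by fun_prop) (by fun_prop)
      (by fun_prop) hε0 ((hpath r hr).mono fun _ h => h.1) ((hpath r hr).mono fun _ h => h.2) hU
      hUc hc₁ hc₀ r
  refine hasDerivWithinAt_zero_of_abs_sub_le_sq
    (M := (∫ ω, |c₁ (X ω)| ∂P + ∫ ω, |c₀ (X ω)| ∂P) / ε) fun r hr => ?_
  obtain ⟨hHr, hHr_le⟩ := key r (Ico_subset_Icc_self hr)
  obtain ⟨hH₀, hH₀_le⟩ := key 0 (left_mem_Icc.2 zero_le_one)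
  rw [hFH, hFH]
  calc _ ≤ _ := abs_integral_add_sub_integral_add_le hHr hH₀
    _ ≤ _ := add_le_add hHr_le hH₀_le
    _ = _ := by rw [abs_zero, zero_mul, add_zero, ← sq_abs r]; ring

/-- Neyman orthogonality of the AR-type LATE score: Fix `θ₀ ∈ ℝ`. For a nuisance
parameter `η = (g, m, p)` with `ε ≤ p(X) ≤ 1 − ε` a.s., `Y ∈ L²(P)`,
`g₀(1,X), g₀(0,X) ∈ L²(P)`, and `g(z,X) − g₀(z,X)`, `m(z,X) − m₀(z,X)` (for `z ∈ {0,1}`) and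
`p(X) − p₀(X)` all in `L²(P)`, the map `r ↦ E_P[ψ(W; θ₀, η₀ + r(η − η₀))]`, defined for
`r ∈ [0,1)`, is differentiable at `r = 0` with derivative `0`. -/
theorem stmt2
    {Ω 𝒳 : Type*} [MeasurableSpace Ω] [MeasurableSpace 𝒳]
    (P : Measure Ω) [IsProbabilityMeasure P]
    (Y D Z : Ω → ℝ) (X : Ω → 𝒳)
    (hYm : Measurable Y) (hDm : Measurable D) (hZm : Measurable Z) (hXm : Measurable X)
    (hDval : ∀ ω, D ω = 0 ∨ D ω = 1) (hZval : ∀ ω, Z ω = 0 ∨ Z ω = 1)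
    -- the true nuisance parameter η₀ = (g₀, m₀, p₀)
    (g0 m0 : ℝ → 𝒳 → ℝ) (p0 : 𝒳 → ℝ)
    (hg0m : Measurable (Function.uncurry g0)) (hm0m : Measurable (Function.uncurry m0))
    (hp0m : Measurable p0)
    (hp0val : ∀ x, 0 < p0 x ∧ p0 x < 1)
    (hcY : P[Y | MeasurableSpace.comap (fun ω => (Z ω, X ω)) inferInstance]
        =ᵐ[P] fun ω => g0 (Z ω) (X ω))
    (hcD : P[D | MeasurableSpace.comap (fun ω => (Z ω, X ω)) inferInstance]
        =ᵐ[P] fun ω => m0 (Z ω) (X ω))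
    (hcZ : P[Z | MeasurableSpace.comap X inferInstance] =ᵐ[P] fun ω => p0 (X ω))
    (ε : ℝ) (hε : ε ∈ Set.Ioo (0 : ℝ) (1 / 2))
    (hp0bd : ∀ᵐ ω ∂P, ε ≤ p0 (X ω) ∧ p0 (X ω) ≤ 1 - ε)
    -- the perturbation direction nuisance parameter η = (g, m, p)
    (g m : ℝ → 𝒳 → ℝ) (p : 𝒳 → ℝ)
    (hgm : Measurable (Function.uncurry g)) (hmm : Measurable (Function.uncurry m))
    (hpm : Measurable p)
    (hpval : ∀ x, 0 < p x ∧ p x < 1)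
    (hpbd : ∀ᵐ ω ∂P, ε ≤ p (X ω) ∧ p (X ω) ≤ 1 - ε)
    -- square-integrability hypotheses
    (θ0 : ℝ)
    (hY2 : MemLp Y 2 P)
    (hg01 : MemLp (fun ω => g0 1 (X ω)) 2 P)
    (hg00 : MemLp (fun ω => g0 0 (X ω)) 2 P)
    (hgd1 : MemLp (fun ω => g 1 (X ω) - g0 1 (X ω)) 2 P)
    (hgd0 : MemLp (fun ω => g 0 (X ω) - g0 0 (X ω)) 2 P)
    (hmd1 : MemLp (fun ω => m 1 (X ω) - m0 1 (X ω)) 2 P)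
    (hmd0 : MemLp (fun ω => m 0 (X ω) - m0 0 (X ω)) 2 P)
    (hpd : MemLp (fun ω => p (X ω) - p0 (X ω)) 2 P)
    -- the map r ↦ E_P[ψ(W; θ₀, η₀ + r(η − η₀))]
    (F : ℝ → ℝ)
    (hF : ∀ r, F r =
      ∫ ω,
        ((g0 1 (X ω) + r * (g 1 (X ω) - g0 1 (X ω)))
          - (g0 0 (X ω) + r * (g 0 (X ω) - g0 0 (X ω)))
          + Z ω * (Y ω - (g0 1 (X ω) + r * (g 1 (X ω) - g0 1 (X ω))))
              / (p0 (X ω) + r * (p (X ω) - p0 (X ω)))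
          - (1 - Z ω) * (Y ω - (g0 0 (X ω) + r * (g 0 (X ω) - g0 0 (X ω))))
              / (1 - (p0 (X ω) + r * (p (X ω) - p0 (X ω))))
          - θ0 * ((m0 1 (X ω) + r * (m 1 (X ω) - m0 1 (X ω)))
              - (m0 0 (X ω) + r * (m 0 (X ω) - m0 0 (X ω)))
              + Z ω * (D ω - (m0 1 (X ω) + r * (m 1 (X ω) - m0 1 (X ω))))
                  / (p0 (X ω) + r * (p (X ω) - p0 (X ω)))
              - (1 - Z ω) * (D ω - (m0 0 (X ω) + r * (m 0 (X ω) - m0 0 (X ω))))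
                  / (1 - (p0 (X ω) + r * (p (X ω) - p0 (X ω)))))) ∂P) :
    HasDerivWithinAt F 0 (Set.Ico (0 : ℝ) 1) 0 :=
  stmt2_general P Y D Z X hDm hZm hXm hDval hZval g0 m0 p0 hg0m hm0m hp0m hcY hcD hcZ ε hε hp0bd g m
    p hgm hmm hpm hpbd θ0 hY2 hgd1 hgd0 hmd1 hmd0 F hF
end

section
/- Suppose Y ∈ L²(P), E[Y | Z, X] = g₀(Z,X) a.s., and E[(Y − g₀(Z,X))² | X] ≤ c₁ a.s. for some c₁ > 0. Let g(1,·) : 𝒳 → ℝ and p : 𝒳 → (0,1) be measurable with ε ≤ p(X) ≤ 1 − ε and ε ≤ p₀(X) ≤ 1 − ε a.s., and with g(1,X) − g₀(1,X) ∈ L²(P) and p(X) − p₀(X) ∈ L²(P). Then ‖Z(Y − g(1,X))/p(X) − Z(Y − g₀(1,X))/p₀(X)‖_{P,2} ≤ ε^{−2} (‖g(1,X) − g₀(1,X)‖_{P,2} + √c₁ · ‖p(X) − p₀(X)‖_{P,2}). -/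
/-! Since `Z ∈ {0,1}` we have `Z g₀(Z,X) = Z g₀(1,X)`, so the difference splits as
`Z (g₀(1,X) − g(1,X)) / p(X) + Z (p₀(X) − p(X)) (Y − g₀(Z,X)) / (p(X) p₀(X))`, and the overlap
bounds make both denominators at least `ε²`. The second term is controlled by conditioning on `X`:
`p(X) − p₀(X)` is `X`-measurable and bounded, so
`E[(p − p₀)² (Y − g₀)²] = E[(p − p₀)² E[(Y − g₀)² | X]] ≤ c₁ E[(p − p₀)²]`. -/

open MeasureTheory
open scoped ENNReal

theorem abs_mul_div_le_inv_mul_abs {z w c δ : ℝ} (hz : |z| ≤ 1) (hδ : 0 < δ) (hc : δ ≤ c) :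
    |z * w / c| ≤ δ⁻¹ * |w| := by
  have hc0 : 0 < c := hδ.trans_le hc
  calc |z * w / c| = |z| * |w| / c := by rw [abs_div, abs_mul, abs_of_pos hc0]
    _ ≤ |w| / c := by gcongr; exact mul_le_of_le_one_left (abs_nonneg w) hz
    _ ≤ |w| / δ := by gcongr
    _ = δ⁻¹ * |w| := by rw [div_eq_inv_mul]

theorem ipw_sub_ipw_eq {z y g q q₀ : ℝ} (h : ℝ → ℝ) (hz : z = 0 ∨ z = 1) (hq : q ≠ 0)
    (hq₀ : q₀ ≠ 0) :
    z * (y - h 1) / q₀ - z * (y - g) / q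
      = z * (g - h 1) / q + z * ((q - q₀) * (y - h z)) / (q * q₀) := by
  rcases hz with rfl | rfl
  · simp
  · field_simp
    ring

section

variable {α : Type*} {m m0 : MeasurableSpace α} {μ : Measure α}

theorem MeasureTheory.MemLp.eLpNorm_two_eq_sqrt_integral_sq {f : α → ℝ} (hf : MemLp f 2 μ) :
    eLpNorm f 2 μ = ENNReal.ofReal √(∫ ω, f ω ^ 2 ∂μ) := by
  rw [hf.eLpNorm_eq_integral_rpow_norm two_ne_zero ENNReal.ofNat_ne_top, Real.sqrt_eq_rpow]
  simp [one_div]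

theorem eLpNorm_mul_div_le_of_abs_le_one {z w c : α → ℝ} {δ : ℝ} (hz : ∀ᵐ ω ∂μ, |z ω| ≤ 1)
    (hδ : 0 < δ) (hc : ∀ᵐ ω ∂μ, δ ≤ c ω) (q : ℝ≥0∞) :
    eLpNorm (fun ω => z ω * w ω / c ω) q μ ≤ ENNReal.ofReal δ⁻¹ * eLpNorm w q μ := by
  refine eLpNorm_le_mul_eLpNorm_of_ae_le_mul ?_ q
  filter_upwards [hz, hc] with ω hzω hcω
  exact abs_mul_div_le_inv_mul_abs hzω hδ hcω

theorem integral_mul_le_of_condExp_le (hm : m ≤ m0) [SigmaFinite (μ.trim hm)] {U V : α → ℝ}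
    {c : ℝ} (hV : StronglyMeasurable[m] V) (hV0 : 0 ≤ᵐ[μ] V) (hVi : Integrable V μ)
    (hUi : Integrable U μ) (hVU : Integrable (V * U) μ) (hc : ∀ᵐ ω ∂μ, μ[U|m] ω ≤ c) :
    ∫ ω, V ω * U ω ∂μ ≤ c * ∫ ω, V ω ∂μ := by
  have hpull : μ[V * U|m] =ᵐ[μ] V * μ[U|m] := condExp_mul_of_stronglyMeasurable_left hV hVU hUi
  calc ∫ ω, V ω * U ω ∂μ = ∫ ω, (V * μ[U|m]) ω ∂μ :=
        (integral_condExp hm).symm.trans (integral_congr_ae hpull)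
    _ ≤ ∫ ω, V ω * c ∂μ := by
        refine integral_mono_ae (integrable_condExp.congr hpull) (hVi.mul_const c) ?_
        filter_upwards [hV0, hc] with ω hVω hcω
        exact mul_le_mul_of_nonneg_left hcω hVω
    _ = c * ∫ ω, V ω ∂μ := by rw [integral_mul_const, mul_comm]

theorem eLpNorm_mul_le_of_condExp_sq_le [IsFiniteMeasure μ] (hm : m ≤ m0) {U V : α → ℝ}
    {C c : ℝ} (hV : StronglyMeasurable[m] V) (hVb : ∀ᵐ ω ∂μ, |V ω| ≤ C) (hU : MemLp U 2 μ)
    (hc : ∀ᵐ ω ∂μ, μ[fun ω => U ω ^ 2|m] ω ≤ c) :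
    eLpNorm (fun ω => V ω * U ω) 2 μ ≤ ENNReal.ofReal √c * eLpNorm V 2 μ := by
  have hVm : AEStronglyMeasurable V μ := (hV.mono hm).aestronglyMeasurable
  have hV2 : MemLp V 2 μ := MemLp.of_bound hVm C (by simpa only [Real.norm_eq_abs] using hVb)
  have hU2 : Integrable (fun ω => U ω ^ 2) μ := hU.integrable_sq
  have hVU2 : Integrable (fun ω => V ω ^ 2 * U ω ^ 2) μ := by
    refine hU2.bdd_mul (c := C ^ 2) (hVm.pow 2) ?_
    filter_upwards [hVb] with ω hω
    rw [norm_pow, Real.norm_eq_abs]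
    exact pow_le_pow_left₀ (abs_nonneg _) hω 2
  have hVU : MemLp (fun ω => V ω * U ω) 2 μ :=
    (memLp_two_iff_integrable_sq (f := fun ω => V ω * U ω) (hVm.mul hU.1)).2
      (by simpa only [mul_pow] using hVU2)
  have key : ∫ ω, V ω ^ 2 * U ω ^ 2 ∂μ ≤ c * ∫ ω, V ω ^ 2 ∂μ :=
    integral_mul_le_of_condExp_le hm (hV.pow 2) (ae_of_all _ fun ω => sq_nonneg (V ω))
      hV2.integrable_sq hU2 hVU2 hc
  rw [hVU.eLpNorm_two_eq_sqrt_integral_sq, hV2.eLpNorm_two_eq_sqrt_integral_sq,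
    ← ENNReal.ofReal_mul (Real.sqrt_nonneg c),
    ← Real.sqrt_mul' c (integral_nonneg fun ω => sq_nonneg (V ω))]
  gcongr
  simpa only [mul_pow] using key

end

theorem stmt6_general
    {Ω 𝒳 : Type*} [MeasurableSpace Ω] [MeasurableSpace 𝒳]
    (P : Measure Ω) [IsProbabilityMeasure P]
    (Y Z : Ω → ℝ) (X : Ω → 𝒳)
    (hYm : Measurable Y) (hZm : Measurable Z) (hXm : Measurable X)
    (hZval : ∀ ω, Z ω = 0 ∨ Z ω = 1)
    (g0 : ℝ → 𝒳 → ℝ) (p0 : 𝒳 → ℝ)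
    (hg0m : Measurable (Function.uncurry g0)) (hp0m : Measurable p0)
    (hp0val : ∀ x, 0 < p0 x ∧ p0 x < 1)
    (ε : ℝ) (hε : ε ∈ Set.Ioo (0 : ℝ) (1 / 2))
    (c₁ : ℝ)
    (hY2 : MemLp Y 2 P)
    (hcY : P[Y | MeasurableSpace.comap (fun ω => (Z ω, X ω)) inferInstance]
        =ᵐ[P] fun ω => g0 (Z ω) (X ω))
    (hcondvar : ∀ᵐ ω ∂P,
      (P[fun ω' => (Y ω' - g0 (Z ω') (X ω')) ^ 2 | MeasurableSpace.comap X inferInstance]) ω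
        ≤ c₁)
    (g1 : 𝒳 → ℝ) (p : 𝒳 → ℝ)
    (hg1m : Measurable g1) (hpm : Measurable p)
    (hpval : ∀ x, 0 < p x ∧ p x < 1)
    (hpbd : ∀ᵐ ω ∂P, ε ≤ p (X ω) ∧ p (X ω) ≤ 1 - ε)
    (hp0bd : ∀ᵐ ω ∂P, ε ≤ p0 (X ω) ∧ p0 (X ω) ≤ 1 - ε) :
    eLpNorm (fun ω =>
        Z ω * (Y ω - g1 (X ω)) / p (X ω) - Z ω * (Y ω - g0 1 (X ω)) / p0 (X ω)) 2 P
      ≤ ENNReal.ofReal (ε ^ (-2 : ℝ))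
          * (eLpNorm (fun ω => g1 (X ω) - g0 1 (X ω)) 2 P
              + ENNReal.ofReal (Real.sqrt c₁)
                  * eLpNorm (fun ω => p (X ω) - p0 (X ω)) 2 P) := by
  obtain ⟨hε0, hε_half⟩ := hε
  have hZ1 : ∀ᵐ ω ∂P, |Z ω| ≤ 1 := ae_of_all _ fun ω => by rcases hZval ω with h | h <;> simp [h]
  have hp_sub_p0 : ∀ᵐ ω ∂P, |p (X ω) - p0 (X ω)| ≤ 1 := ae_of_all _ fun ω =>
    abs_sub_le_of_nonneg_of_le (hpval _).1.le (hpval _).2.le (hp0val _).1.le (hp0val _).2.le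
  have hε_sq_le_p : ∀ᵐ ω ∂P, ε ^ 2 ≤ p (X ω) :=
    hpbd.mono fun ω hω => le_trans (by nlinarith) hω.1
  have hε_sq_le_pp0 : ∀ᵐ ω ∂P, ε ^ 2 ≤ p (X ω) * p0 (X ω) :=
    (hpbd.and hp0bd).mono fun ω hω => sq ε ▸ mul_le_mul hω.1.1 hω.2.1 hε0.le (hε0.le.trans hω.1.1)
  have hg0ZX : Measurable fun ω => g0 (Z ω) (X ω) := hg0m.comp (hZm.prodMk hXm)
  have hresid : MemLp (fun ω => Y ω - g0 (Z ω) (X ω)) 2 P :=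
    hY2.sub ((hY2.condExp one_le_two).ae_eq hcY)
  have hprod : eLpNorm (fun ω => (p (X ω) - p0 (X ω)) * (Y ω - g0 (Z ω) (X ω))) 2 P
      ≤ ENNReal.ofReal √c₁ * eLpNorm (fun ω => p (X ω) - p0 (X ω)) 2 P :=
    eLpNorm_mul_le_of_condExp_sq_le hXm.comap_le
      ((hpm.sub hp0m).comp (comap_measurable X)).stronglyMeasurable hp_sub_p0 hresid hcondvar
  have hA := eLpNorm_mul_div_le_of_abs_le_one (w := fun ω => g1 (X ω) - g0 1 (X ω)) hZ1
    (by positivity) hε_sq_le_p 2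
  have hB := eLpNorm_mul_div_le_of_abs_le_one
    (w := fun ω => (p (X ω) - p0 (X ω)) * (Y ω - g0 (Z ω) (X ω))) hZ1 (by positivity)
    hε_sq_le_pp0 2
  have hdecomp : (fun ω => Z ω * (Y ω - g1 (X ω)) / p (X ω) - Z ω * (Y ω - g0 1 (X ω)) / p0 (X ω))
      = -fun ω => Z ω * (g1 (X ω) - g0 1 (X ω)) / p (X ω)
          + Z ω * ((p (X ω) - p0 (X ω)) * (Y ω - g0 (Z ω) (X ω))) / (p (X ω) * p0 (X ω)) :=
    funext fun ω => by
      rw [Pi.neg_apply, ← ipw_sub_ipw_eq (fun z => g0 z (X ω)) (hZval ω) (hpval (X ω)).1.ne'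
        (hp0val (X ω)).1.ne', neg_sub]
  rw [hdecomp, eLpNorm_neg, Real.rpow_neg hε0.le, Real.rpow_two]
  calc _ ≤ _ := eLpNorm_add_le (by fun_prop : Measurable _).aestronglyMeasurable
        (by fun_prop : Measurable _).aestronglyMeasurable one_le_two
    _ ≤ _ := add_le_add hA (hB.trans (by gcongr))
    _ = _ := (mul_add _ _ _).symm

/-- If `Y ∈ L²(P)`, `E[Y | Z, X] = g₀(Z,X)` a.s., and
`E[(Y − g₀(Z,X))² | X] ≤ c₁` a.s. for some `c₁ > 0`, then for measurable `g(1,·)` and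
`p : 𝒳 → (0,1)` with `ε ≤ p(X) ≤ 1 − ε` and `ε ≤ p₀(X) ≤ 1 − ε` a.s., and
`g(1,X) − g₀(1,X), p(X) − p₀(X) ∈ L²(P)`,
`‖Z(Y − g(1,X))/p(X) − Z(Y − g₀(1,X))/p₀(X)‖_{P,2}
  ≤ ε⁻² (‖g(1,X) − g₀(1,X)‖_{P,2} + √c₁ ‖p(X) − p₀(X)‖_{P,2})`. -/
theorem stmt6
    {Ω 𝒳 : Type*} [MeasurableSpace Ω] [MeasurableSpace 𝒳]
    (P : Measure Ω) [IsProbabilityMeasure P]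
    (Y D Z : Ω → ℝ) (X : Ω → 𝒳)
    (hYm : Measurable Y) (hDm : Measurable D) (hZm : Measurable Z) (hXm : Measurable X)
    (hDval : ∀ ω, D ω = 0 ∨ D ω = 1) (hZval : ∀ ω, Z ω = 0 ∨ Z ω = 1)
    (g0 : ℝ → 𝒳 → ℝ) (p0 : 𝒳 → ℝ)
    (hg0m : Measurable (Function.uncurry g0)) (hp0m : Measurable p0)
    (hp0val : ∀ x, 0 < p0 x ∧ p0 x < 1)
    (hcZ : P[Z | MeasurableSpace.comap X inferInstance] =ᵐ[P] fun ω => p0 (X ω))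
    (ε : ℝ) (hε : ε ∈ Set.Ioo (0 : ℝ) (1 / 2))
    (c₁ : ℝ) (hc₁ : 0 < c₁)
    (hY2 : MemLp Y 2 P)
    (hcY : P[Y | MeasurableSpace.comap (fun ω => (Z ω, X ω)) inferInstance]
        =ᵐ[P] fun ω => g0 (Z ω) (X ω))
    (hcondvar : ∀ᵐ ω ∂P,
      (P[fun ω' => (Y ω' - g0 (Z ω') (X ω')) ^ 2 | MeasurableSpace.comap X inferInstance]) ω
        ≤ c₁)
    (g1 : 𝒳 → ℝ) (p : 𝒳 → ℝ)
    (hg1m : Measurable g1) (hpm : Measurable p)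
    (hpval : ∀ x, 0 < p x ∧ p x < 1)
    (hpbd : ∀ᵐ ω ∂P, ε ≤ p (X ω) ∧ p (X ω) ≤ 1 - ε)
    (hp0bd : ∀ᵐ ω ∂P, ε ≤ p0 (X ω) ∧ p0 (X ω) ≤ 1 - ε)
    (hgd : MemLp (fun ω => g1 (X ω) - g0 1 (X ω)) 2 P)
    (hpd : MemLp (fun ω => p (X ω) - p0 (X ω)) 2 P) :
    eLpNorm (fun ω =>
        Z ω * (Y ω - g1 (X ω)) / p (X ω) - Z ω * (Y ω - g0 1 (X ω)) / p0 (X ω)) 2 P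
      ≤ ENNReal.ofReal (ε ^ (-2 : ℝ))
          * (eLpNorm (fun ω => g1 (X ω) - g0 1 (X ω)) 2 P
              + ENNReal.ofReal (Real.sqrt c₁)
                  * eLpNorm (fun ω => p (X ω) - p0 (X ω)) 2 P) :=
  stmt6_general P Y Z X hYm hZm hXm hZval g0 p0 hg0m hp0m hp0val ε hε c₁ hY2 hcY hcondvar g1 p hg1m
    hpm hpval hpbd hp0bd
end

section
/- (Cross-fitting remainder bound.) Let W, W₁, …, Wₙ be i.i.d. random elements of a measurable space 𝒲, and let T be a random element of a measurable space 𝒯 that is independent of (W₁, …, Wₙ). Let φ : 𝒲 × 𝒯 → ℝ be jointly measurable and φ₀ : 𝒲 → ℝ be square-integrable, and suppose E[(φ(W, t) − φ₀(W))²] ≤ r² for every t ∈ 𝒯, where r ≥ 0. Then, writing Φ(t) := E[φ(W, t)], one has E[ ( n^{−1/2} Σ_{i=1}^n { (φ(Wᵢ, T) − Φ(T)) − (φ₀(Wᵢ) − E[φ₀(W)]) } )² | T ] ≤ r² almost surely; in particular the unconditional second moment of this normalized sum is at most r². -/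
/-!
Because `T` is independent of the sample, the joint law of the sample and `T` is a product, and
Fubini shows that conditioning on `T` just freezes `T = t`: the conditional second moment is
`t ↦ E[R(t)²]` evaluated at `T`, where `R(t)` is the normalized sum with `t` fixed. For fixed `t`,
`R(t)` is `n^{-1/2}` times a sum of `n` i.i.d. copies of `ψ(W) − E ψ(W)` with `ψ = φ(·, t) − φ₀`,
so `E[R(t)²] = Var ψ(W) ≤ E[ψ(W)²] ≤ r²`.

The catch is that `Φ(t)` is a junk value when `φ(W, t)` is not integrable. But `R(t)` is square
integrable for almost every `t`, and a sum of independent variables is square integrable only if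
each summand is (a section of an integrable function on a product space is integrable), so for
those `t` every moment above is genuine.
-/

open MeasureTheory ProbabilityTheory

namespace ProbabilityTheory

variable {Ω : Type*} [MeasurableSpace Ω] {μ : Measure Ω}

lemma IndepFun.memLp_two_of_add [IsProbabilityMeasure μ] {Y Z : Ω → ℝ} (hY : Measurable Y)
    (hZ : Measurable Z) (hYZ : IndepFun Y Z μ) (hsum : MemLp (Y + Z) 2 μ) : MemLp Y 2 μ := by
  have hprod : μ.map (fun ω => (Y ω, Z ω)) = (μ.map Y).prod (μ.map Z) :=
    (indepFun_iff_map_prod_eq_prod_map_map hY.aemeasurable hZ.aemeasurable).1 hYZ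
  have hadd : MemLp (fun p : ℝ × ℝ => p.1 + p.2) 2 ((μ.map Y).prod (μ.map Z)) := by
    rw [← hprod, memLp_map_measure_iff (by fun_prop) (hY.prodMk hZ).aemeasurable]
    exact hsum
  have := Measure.isProbabilityMeasure_map (μ := μ) hZ.aemeasurable
  obtain ⟨z, hz⟩ : ∃ z, Integrable (fun y => (y + z) ^ 2) (μ.map Y) :=
    ((memLp_two_iff_integrable_sq hadd.1).1 hadd).prod_left_ae.exists
  have hshift : MemLp (fun y : ℝ => y + z - z) 2 (μ.map Y) :=
    ((memLp_two_iff_integrable_sq (by fun_prop)).2 hz).sub (memLp_const z)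
  simp only [add_sub_cancel_right] at hshift
  exact (memLp_map_measure_iff aestronglyMeasurable_id hY.aemeasurable).1 hshift

lemma iIndepFun.memLp_two_of_sum [IsProbabilityMeasure μ] {ι : Type*} [Fintype ι]
    {Y : ι → Ω → ℝ} (hY : ∀ i, Measurable (Y i)) (hind : iIndepFun Y μ)
    (hsum : MemLp (∑ i, Y i) 2 μ) (i : ι) : MemLp (Y i) 2 μ := by
  classical
  have hrest : IndepFun (Y i) (∑ j ∈ Finset.univ.erase i, Y j) μ :=
    (hind.indepFun_finsetSum_of_notMem hY (Finset.notMem_erase i _)).symm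
  refine hrest.memLp_two_of_add (hY i) (by fun_prop) ?_
  rwa [Finset.add_sum_erase _ _ (Finset.mem_univ i)]

lemma iIndepFun.variance_sum_of_identDistrib {ι Ω' : Type*} [Fintype ι] [MeasurableSpace Ω']
    {ν : Measure Ω'} {Y : ι → Ω → ℝ} {X : Ω' → ℝ} (hind : iIndepFun Y μ)
    (hident : ∀ i, IdentDistrib (Y i) X μ ν) (hX : MemLp X 2 ν) :
    variance (∑ i, Y i) μ = Fintype.card ι * variance X ν := by
  rw [IndepFun.variance_sum (fun i _ => (hident i).memLp_iff.2 hX)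
    (fun i _ j _ hij => hind.indepFun hij)]
  simp [(hident _).variance_eq]

lemma iIndepFun.memLp_two_of_sum_sub [IsProbabilityMeasure μ] {ι Ω' : Type*} [Fintype ι]
    [Nonempty ι] [MeasurableSpace Ω'] {ν : Measure Ω'} {Y : ι → Ω → ℝ} {X : Ω' → ℝ}
    (hY : ∀ i, Measurable (Y i)) (hind : iIndepFun Y μ) (hident : ∀ i, IdentDistrib (Y i) X μ ν)
    {m : ℝ} (hsum : MemLp (fun ω => ∑ i, (Y i ω - m)) 2 μ) : MemLp X 2 ν := by
  let i : ι := Classical.arbitrary ι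
  have hcentered : MemLp (fun ω => Y i ω - m) 2 μ := by
    refine iIndepFun.memLp_two_of_sum (Y := fun i ω => Y i ω - m)
      (fun i => (hY i).sub_const m) (hind.comp _ fun _ => measurable_id.sub_const m) ?_ i
    convert hsum using 1
    ext ω
    simp [Finset.sum_apply]
  refine (hident i).memLp_iff.1 ?_
  convert hcentered.add (memLp_const m) using 1
  ext ω
  simp

lemma iIndepFun.integral_sq_sum_sub_integral [IsProbabilityMeasure μ] {ι Ω' : Type*} [Fintype ι]
    [MeasurableSpace Ω'] {ν : Measure Ω'} {Y : ι → Ω → ℝ} {X : Ω' → ℝ} (hind : iIndepFun Y μ)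
    (hident : ∀ i, IdentDistrib (Y i) X μ ν) (hX : MemLp X 2 ν) :
    ∫ ω, (∑ i, (Y i ω - ∫ x, X x ∂ν)) ^ 2 ∂μ = Fintype.card ι * variance X ν := by
  have hY : ∀ i, MemLp (Y i) 2 μ := fun i => (hident i).memLp_iff.2 hX
  have hmean : ∫ ω, (∑ i, Y i) ω ∂μ = Fintype.card ι * ∫ x, X x ∂ν := by
    simp only [Finset.sum_apply]
    rw [integral_finsetSum _ fun i _ => (hY i).integrable one_le_two]
    simp [(hident _).integral_eq]
  rw [← hind.variance_sum_of_identDistrib hident hX,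
    variance_eq_integral (memLp_finsetSum' _ fun i _ => hY i).aemeasurable, hmean]
  simp [Finset.sum_apply, Finset.sum_sub_distrib]

lemma integral_comp_prodMk_right_eq_integral_map {α β E : Type*} [MeasurableSpace α]
    [MeasurableSpace β] [NormedAddCommGroup E] [NormedSpace ℝ E] {X : Ω → α} {f : α × β → E}
    (hX : Measurable X) (hf : StronglyMeasurable f) (t : β) :
    ∫ ω, f (X ω, t) ∂μ = ∫ x, f (x, t) ∂(μ.map X) :=
  (integral_map hX.aemeasurable
    (hf.comp_measurable measurable_prodMk_right).aestronglyMeasurable).symm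

section IndepFun

variable {α β E : Type*} [MeasurableSpace α] [MeasurableSpace β] [NormedAddCommGroup E]
  [IsFiniteMeasure μ] {X : Ω → α} {T : Ω → β} {f : α × β → E}

lemma IndepFun.integrable_prod_map (hX : Measurable X) (hT : Measurable T)
    (hXT : IndepFun X T μ) (hf : StronglyMeasurable f)
    (hint : Integrable (fun ω => f (X ω, T ω)) μ) :
    Integrable f ((μ.map X).prod (μ.map T)) := by
  rw [← (indepFun_iff_map_prod_eq_prod_map_map hX.aemeasurable hT.aemeasurable).1 hXT,
    integrable_map_measure hf.aestronglyMeasurable (hX.prodMk hT).aemeasurable]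
  exact hint

lemma IndepFun.ae_integrable_section (hX : Measurable X) (hT : Measurable T)
    (hXT : IndepFun X T μ) (hf : StronglyMeasurable f)
    (hint : Integrable (fun ω => f (X ω, T ω)) μ) :
    ∀ᵐ ω ∂μ, Integrable (fun ω' => f (X ω', T ω)) μ := by
  refine ae_of_ae_map (p := fun t => Integrable (fun ω' => f (X ω', t)) μ) hT.aemeasurable ?_
  filter_upwards [(hXT.integrable_prod_map hX hT hf hint).prod_left_ae] with t ht
  exact (integrable_map_measure (hf.comp_measurable measurable_prodMk_right).aestronglyMeasurable
    hX.aemeasurable).1 ht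

variable [NormedSpace ℝ E]

lemma IndepFun.integrable_integral_section (hX : Measurable X) (hT : Measurable T)
    (hXT : IndepFun X T μ) (hf : StronglyMeasurable f)
    (hint : Integrable (fun ω => f (X ω, T ω)) μ) :
    Integrable (fun ω => ∫ ω', f (X ω', T ω) ∂μ) μ := by
  simp_rw [integral_comp_prodMk_right_eq_integral_map hX hf]
  exact (integrable_map_measure hf.integral_prod_left'.aestronglyMeasurable hT.aemeasurable).1
    (hXT.integrable_prod_map hX hT hf hint).integral_prod_right

lemma IndepFun.integral_comp_eq_integral_integral (hX : Measurable X) (hT : Measurable T)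
    (hXT : IndepFun X T μ) (hf : StronglyMeasurable f)
    (hint : Integrable (fun ω => f (X ω, T ω)) μ) :
    ∫ ω, f (X ω, T ω) ∂μ = ∫ ω, ∫ ω', f (X ω', T ω) ∂μ ∂μ := by
  simp_rw [integral_comp_prodMk_right_eq_integral_map hX hf]
  rw [← integral_map (hX.prodMk hT).aemeasurable hf.aestronglyMeasurable,
    (indepFun_iff_map_prod_eq_prod_map_map hX.aemeasurable hT.aemeasurable).1 hXT,
    integral_prod_symm _ (hXT.integrable_prod_map hX hT hf hint),
    integral_map hT.aemeasurable hf.integral_prod_left'.aestronglyMeasurable]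

lemma IndepFun.condExp_comap_ae_eq [CompleteSpace E] (hX : Measurable X) (hT : Measurable T)
    (hXT : IndepFun X T μ) (hf : StronglyMeasurable f)
    (hint : Integrable (fun ω => f (X ω, T ω)) μ) :
    μ[fun ω => f (X ω, T ω) | MeasurableSpace.comap T inferInstance]
      =ᵐ[μ] fun ω => ∫ ω', f (X ω', T ω) ∂μ := by
  have hg : StronglyMeasurable fun t => ∫ ω', f (X ω', t) ∂μ :=
    (hf.comp_measurable ((hX.comp measurable_snd).prodMk measurable_fst)).integral_prod_right'
  refine (ae_eq_condExp_of_forall_setIntegral_eq hT.comap_le hint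
    (fun s _ _ => (hXT.integrable_integral_section hX hT hf hint).integrableOn) ?_
    (hg.comp_measurable (comap_measurable T)).aestronglyMeasurable).symm
  rintro _ ⟨B, hB, rfl⟩ -
  have hfB : StronglyMeasurable ((Prod.snd ⁻¹' B).indicator f) :=
    hf.indicator (measurable_snd hB)
  have key := hXT.integral_comp_eq_integral_integral hX hT hfB
    ((hint.indicator (hT hB)).congr (ae_of_all _ fun _ => rfl))
  rw [← integral_indicator (hT hB), ← integral_indicator (hT hB)]
  convert key.symm using 2
  · ext ω
    by_cases hω : T ω ∈ B <;> simp [hω]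
  · rfl

end IndepFun

end ProbabilityTheory

section CrossFitting

variable {Ω 𝒲 𝒯 : Type*} [MeasurableSpace Ω] [MeasurableSpace 𝒲] {μ : Measure Ω}

noncomputable def crossFitRemainder {n : ℕ} (φ : 𝒲 × 𝒯 → ℝ) (Φ : 𝒯 → ℝ) (φ0 : 𝒲 → ℝ) (c0 : ℝ)
    (w : Fin n → 𝒲) (t : 𝒯) : ℝ :=
  (n : ℝ) ^ (-(1 : ℝ) / 2) * ∑ i, ((φ (w i, t) - Φ t) - (φ0 (w i) - c0))

lemma measurable_crossFitRemainder [MeasurableSpace 𝒯] {n : ℕ} {φ : 𝒲 × 𝒯 → ℝ} {Φ : 𝒯 → ℝ}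
    {φ0 : 𝒲 → ℝ} (c0 : ℝ) (hφ : Measurable φ) (hΦ : Measurable Φ) (hφ0 : Measurable φ0) :
    Measurable fun p : (Fin n → 𝒲) × 𝒯 => crossFitRemainder φ Φ φ0 c0 p.1 p.2 := by
  unfold crossFitRemainder
  fun_prop

lemma integral_sq_crossFitRemainder_le [IsProbabilityMeasure μ] {n : ℕ} {W : Ω → 𝒲}
    {Ws : Fin n → Ω → 𝒲} (hWsm : ∀ i, Measurable (Ws i)) (hiid : iIndepFun Ws μ)
    (hident : ∀ i, IdentDistrib (Ws i) W μ μ) {φ : 𝒲 × 𝒯 → ℝ} {Φ : 𝒯 → ℝ} {φ0 : 𝒲 → ℝ}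
    {t : 𝒯} {r : ℝ} (hφ : Measurable fun w => φ (w, t)) (hφ0 : Measurable φ0)
    (hφ0sq : MemLp (fun ω => φ0 (W ω)) 2 μ)
    (hbound : ∫ ω, (φ (W ω, t) - φ0 (W ω)) ^ 2 ∂μ ≤ r ^ 2) (hΦ : Φ t = ∫ ω, φ (W ω, t) ∂μ)
    (hsec : MemLp (fun ω => crossFitRemainder φ Φ φ0 (∫ ω, φ0 (W ω) ∂μ) (fun i => Ws i ω) t) 2 μ) :
    ∫ ω, crossFitRemainder φ Φ φ0 (∫ ω, φ0 (W ω) ∂μ) (fun i => Ws i ω) t ^ 2 ∂μ ≤ r ^ 2 := by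
  rcases n.eq_zero_or_pos with rfl | hn
  · simpa [crossFitRemainder] using sq_nonneg r
  have : Nonempty (Fin n) := ⟨⟨0, hn⟩⟩
  set c0 := ∫ ω, φ0 (W ω) ∂μ
  set c := (n : ℝ) ^ (-(1 : ℝ) / 2)
  let ψ : 𝒲 → ℝ := fun w => φ (w, t) - φ0 w
  have hψ : Measurable ψ := hφ.sub hφ0
  have hrem : ∀ ω, crossFitRemainder φ Φ φ0 c0 (fun i => Ws i ω) t
      = c * ∑ i, (ψ (Ws i ω) - (Φ t - c0)) := fun ω => by
    simp only [crossFitRemainder, ψ]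
    congr 1
    exact Finset.sum_congr rfl fun i _ => by ring
  have hc : c ≠ 0 := by positivity
  have hc_sq : c ^ 2 = (n : ℝ)⁻¹ := by
    rw [← Real.rpow_natCast, ← Real.rpow_mul (Nat.cast_nonneg n)]
    norm_num [Real.rpow_neg_one]
  have hsum : MemLp (fun ω => ∑ i, (ψ (Ws i ω) - (Φ t - c0))) 2 μ := by
    have := hsec.const_mul c⁻¹
    simp_rw [hrem, inv_mul_cancel_left₀ hc] at this
    exact this
  have hψident : ∀ i, IdentDistrib (fun ω => ψ (Ws i ω)) (fun ω => ψ (W ω)) μ μ :=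
    fun i => (hident i).comp hψ
  have hψind : iIndepFun (fun i ω => ψ (Ws i ω)) μ := hiid.comp _ fun _ => hψ
  have hψW : MemLp (fun ω => ψ (W ω)) 2 μ :=
    hψind.memLp_two_of_sum_sub (fun i => hψ.comp (hWsm i)) hψident hsum
  have hmean : Φ t - c0 = ∫ ω, ψ (W ω) ∂μ := by
    have hφint : Integrable (fun ω => φ (W ω, t)) μ :=
      ((hψW.integrable one_le_two).add (hφ0sq.integrable one_le_two)).congr
        (ae_of_all _ fun ω => by simp [ψ])
    rw [hΦ, integral_sub hφint (hφ0sq.integrable one_le_two)]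
  calc ∫ ω, crossFitRemainder φ Φ φ0 c0 (fun i => Ws i ω) t ^ 2 ∂μ
      = (n : ℝ)⁻¹ * ∫ ω, (∑ i, (ψ (Ws i ω) - ∫ ω', ψ (W ω') ∂μ)) ^ 2 ∂μ := by
        simp_rw [hrem, mul_pow, hc_sq, hmean]
        exact integral_const_mul _ _
    _ = variance (fun ω => ψ (W ω)) μ := by
        rw [hψind.integral_sq_sum_sub_integral hψident hψW, Fintype.card_fin]
        field_simp
    _ ≤ ∫ ω, ψ (W ω) ^ 2 ∂μ := variance_le_expectation_sq hψW.1
    _ ≤ r ^ 2 := hbound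

end CrossFitting

theorem stmt7_general
    {Ω 𝒲 𝒯 : Type*} [MeasurableSpace Ω] [MeasurableSpace 𝒲] [MeasurableSpace 𝒯]
    (μ : Measure Ω) [IsProbabilityMeasure μ]
    (n : ℕ)
    (W : Ω → 𝒲) (Ws : Fin n → Ω → 𝒲) (T : Ω → 𝒯)
    (hWm : Measurable W) (hWsm : ∀ i, Measurable (Ws i)) (hTm : Measurable T)
    (hiid : iIndepFun Ws μ)
    (hlaw : ∀ i, μ.map (Ws i) = μ.map W)
    (hindep : IndepFun (fun ω i => Ws i ω) T μ)
    (φ : 𝒲 × 𝒯 → ℝ) (hφm : Measurable φ)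
    (φ0 : 𝒲 → ℝ) (hφ0m : Measurable φ0)
    (hφ0sq : MemLp (fun ω => φ0 (W ω)) 2 μ)
    (r : ℝ)
    (hbound : ∀ t, ∫ ω, (φ (W ω, t) - φ0 (W ω)) ^ 2 ∂μ ≤ r ^ 2)
    (Φ : 𝒯 → ℝ) (hΦ : ∀ t, Φ t = ∫ ω, φ (W ω, t) ∂μ)
    (S : Ω → ℝ)
    (hS : ∀ ω, S ω = (n : ℝ) ^ (-(1 : ℝ) / 2) *
      ∑ i : Fin n,
        ((φ (Ws i ω, T ω) - Φ (T ω)) - (φ0 (Ws i ω) - ∫ ω', φ0 (W ω') ∂μ))) :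
    (∀ᵐ ω ∂μ,
      (μ[fun ω' => (S ω') ^ 2 | MeasurableSpace.comap T inferInstance]) ω ≤ r ^ 2) ∧
    ∫ ω, (S ω) ^ 2 ∂μ ≤ r ^ 2 := by
  set c0 := ∫ ω', φ0 (W ω') ∂μ
  let X : Ω → Fin n → 𝒲 := fun ω i => Ws i ω
  let f : (Fin n → 𝒲) × 𝒯 → ℝ := fun p => crossFitRemainder φ Φ φ0 c0 p.1 p.2 ^ 2
  have hXm : Measurable X := measurable_pi_lambda _ hWsm
  have hΦm : Measurable Φ := by
    rw [funext hΦ]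
    exact (hφm.comp ((hWm.comp measurable_snd).prodMk measurable_fst)).stronglyMeasurable
      |>.integral_prod_right'.measurable
  have hFm := measurable_crossFitRemainder (n := n) c0 hφm hΦm hφ0m
  have hfm : StronglyMeasurable f := (hFm.pow_const 2).stronglyMeasurable
  have hSf : (fun ω => S ω ^ 2) = fun ω => f (X ω, T ω) := funext fun ω => by rw [hS]; rfl
  by_cases hint : Integrable (fun ω => S ω ^ 2) μ
  swap
  · rw [condExp_of_not_integrable hint, integral_undef hint]
    exact ⟨ae_of_all _ fun _ => sq_nonneg r, sq_nonneg r⟩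
  rw [hSf] at hint ⊢
  have hident : ∀ i, IdentDistrib (Ws i) W μ μ :=
    fun i => ⟨(hWsm i).aemeasurable, hWm.aemeasurable, hlaw i⟩
  have hcond : ∀ᵐ ω ∂μ, μ[fun ω' => f (X ω', T ω') | MeasurableSpace.comap T inferInstance] ω
      ≤ r ^ 2 := by
    filter_upwards [hindep.condExp_comap_ae_eq hXm hTm hfm hint,
      hindep.ae_integrable_section hXm hTm hfm hint] with ω hω hsec
    have hsecm : AEStronglyMeasurable (fun ω' => crossFitRemainder φ Φ φ0 c0 (X ω') (T ω)) μ :=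
      (hFm.comp (hXm.prodMk measurable_const)).aestronglyMeasurable
    rw [hω]
    exact integral_sq_crossFitRemainder_le hWsm hiid hident (hφm.comp measurable_prodMk_right)
      hφ0m hφ0sq (hbound _) (hΦ _) ((memLp_two_iff_integrable_sq hsecm).2 hsec)
  refine ⟨hcond, ?_⟩
  rw [← integral_condExp hTm.comap_le]
  calc _ ≤ ∫ _, r ^ 2 ∂μ := integral_mono_ae integrable_condExp (integrable_const _) hcond
    _ = r ^ 2 := by simp

/-- Cross-fitting remainder bound: Let `W, W₁, …, Wₙ` be i.i.d. and `T` independent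
of `(W₁, …, Wₙ)`. If `φ` is jointly measurable, `φ₀` is square-integrable, and
`E[(φ(W, t) − φ₀(W))²] ≤ r²` for every `t`, then with `Φ(t) := E[φ(W, t)]`,
`E[(n^{−1/2} Σᵢ {(φ(Wᵢ, T) − Φ(T)) − (φ₀(Wᵢ) − E[φ₀(W)])})² | T] ≤ r²` a.s.; in particular
the unconditional second moment of this normalized sum is at most `r²`. -/
theorem stmt7
    {Ω 𝒲 𝒯 : Type*} [MeasurableSpace Ω] [MeasurableSpace 𝒲] [MeasurableSpace 𝒯]
    (μ : Measure Ω) [IsProbabilityMeasure μ]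
    (n : ℕ) (hn : 0 < n)
    (W : Ω → 𝒲) (Ws : Fin n → Ω → 𝒲) (T : Ω → 𝒯)
    (hWm : Measurable W) (hWsm : ∀ i, Measurable (Ws i)) (hTm : Measurable T)
    (hiid : iIndepFun Ws μ)
    (hlaw : ∀ i, μ.map (Ws i) = μ.map W)
    (hindep : IndepFun (fun ω i => Ws i ω) T μ)
    (φ : 𝒲 × 𝒯 → ℝ) (hφm : Measurable φ)
    (φ0 : 𝒲 → ℝ) (hφ0m : Measurable φ0)
    (hφ0sq : MemLp (fun ω => φ0 (W ω)) 2 μ)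
    (r : ℝ) (hr : 0 ≤ r)
    (hbound : ∀ t, ∫ ω, (φ (W ω, t) - φ0 (W ω)) ^ 2 ∂μ ≤ r ^ 2)
    (Φ : 𝒯 → ℝ) (hΦ : ∀ t, Φ t = ∫ ω, φ (W ω, t) ∂μ)
    (S : Ω → ℝ)
    (hS : ∀ ω, S ω = (n : ℝ) ^ (-(1 : ℝ) / 2) *
      ∑ i : Fin n,
        ((φ (Ws i ω, T ω) - Φ (T ω)) - (φ0 (Ws i ω) - ∫ ω', φ0 (W ω') ∂μ))) :
    (∀ᵐ ω ∂μ,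
      (μ[fun ω' => (S ω') ^ 2 | MeasurableSpace.comap T inferInstance]) ω ≤ r ^ 2) ∧
    ∫ ω, (S ω) ^ 2 ∂μ ≤ r ^ 2 :=
  stmt7_general μ n W Ws T hWm hWsm hTm hiid hlaw hindep φ hφm φ0 hφ0m hφ0sq r hbound Φ hΦ S hS
end

section
/- (Nonlinear impact coefficient lower bound.) Let x₁, …, x_N ∈ ℝᵖ with M := max_{1≤i≤N} ‖xᵢ‖_∞ > 0, let T ⊆ {1, …, p} be nonempty, let c₀ ≥ 0, and let κ > 0 satisfy (N^{−1} Σ_{i=1}^N (xᵢᵀδ)²)^{1/2} ≥ κ ‖δ_T‖₁ for every δ in the cone 𝒟 := {δ ∈ ℝᵖ : ‖δ_{T^c}‖₁ ≤ c₀ ‖δ_T‖₁}. Then every nonzero δ ∈ 𝒟 satisfies N^{−1} Σ_{i=1}^N |xᵢᵀδ|³ > 0 and (N^{−1} Σ_{i=1}^N (xᵢᵀδ)²)^{3/2} / (N^{−1} Σ_{i=1}^N |xᵢᵀδ|³) ≥ κ / ((1 + c₀) M). -/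
/-- Nonlinear impact coefficient lower bound: Let `x₁,…,x_N ∈ ℝᵖ` with
`M := max_{i,j} |xᵢⱼ| > 0`, `T ⊆ {1,…,p}` nonempty, `c₀ ≥ 0`, and `κ > 0` such that
`(N⁻¹ Σᵢ (xᵢᵀδ)²)^{1/2} ≥ κ ‖δ_T‖₁` on the cone `𝒟 = {δ : ‖δ_{T^c}‖₁ ≤ c₀‖δ_T‖₁}`. Then
every nonzero `δ ∈ 𝒟` satisfies `N⁻¹ Σᵢ |xᵢᵀδ|³ > 0` and
`(N⁻¹ Σᵢ (xᵢᵀδ)²)^{3/2} / (N⁻¹ Σᵢ |xᵢᵀδ|³) ≥ κ / ((1 + c₀) M)`. -/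
theorem stmt10
    (N p : ℕ) (hN : 0 < N) (hp : 0 < p)
    (x : Fin N → Fin p → ℝ)
    (M : ℝ) (hM : M = ⨆ i : Fin N, ⨆ j : Fin p, |x i j|) (hMpos : 0 < M)
    (T : Finset (Fin p)) (hT : T.Nonempty)
    (c₀ : ℝ) (hc₀ : 0 ≤ c₀)
    (κ : ℝ) (hκ : 0 < κ)
    (hRE : ∀ δ : Fin p → ℝ,
      (∑ j ∈ Tᶜ, |δ j|) ≤ c₀ * ∑ j ∈ T, |δ j| →
      Real.sqrt ((N : ℝ)⁻¹ * ∑ i, (∑ j, x i j * δ j) ^ 2) ≥ κ * ∑ j ∈ T, |δ j|) :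
    ∀ δ : Fin p → ℝ,
      (∑ j ∈ Tᶜ, |δ j|) ≤ c₀ * ∑ j ∈ T, |δ j| →
      δ ≠ 0 →
      (0 < (N : ℝ)⁻¹ * ∑ i, |∑ j, x i j * δ j| ^ 3) ∧
      ((N : ℝ)⁻¹ * ∑ i, (∑ j, x i j * δ j) ^ 2) ^ ((3 : ℝ) / 2)
          / ((N : ℝ)⁻¹ * ∑ i, |∑ j, x i j * δ j| ^ 3)
        ≥ κ / ((1 + c₀) * M) := by
  intro δ hcone hδ0
  set a : Fin N → ℝ := fun i => ∑ j, x i j * δ j with ha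
  set s : ℝ := ∑ j ∈ T, |δ j| with hs
  have hsnn : 0 ≤ s := Finset.sum_nonneg fun j _ => abs_nonneg _
  -- s > 0
  have hspos : 0 < s := by
    rcases hsnn.lt_or_eq with h | h
    · exact h
    · exfalso
      apply hδ0
      funext j
      have hT0 : ∀ j ∈ T, |δ j| = 0 :=
        (Finset.sum_eq_zero_iff_of_nonneg fun j _ => abs_nonneg _).1 h.symm
      have hTc0 : ∀ j ∈ Tᶜ, |δ j| = 0 := by
        have : (∑ j ∈ Tᶜ, |δ j|) ≤ 0 := by
          calc (∑ j ∈ Tᶜ, |δ j|) ≤ c₀ * s := hcone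
          _ = 0 := by rw [← h]; ring
        have h0 : (∑ j ∈ Tᶜ, |δ j|) = 0 :=
          le_antisymm this (Finset.sum_nonneg fun j _ => abs_nonneg _)
        exact (Finset.sum_eq_zero_iff_of_nonneg fun j _ => abs_nonneg _).1 h0
      by_cases hj : j ∈ T
      · simpa using abs_eq_zero.1 (hT0 j hj)
      · simpa using abs_eq_zero.1 (hTc0 j (Finset.mem_compl.2 hj))
  set Q : ℝ := (N : ℝ)⁻¹ * ∑ i, a i ^ 2 with hQ
  have hQnn : 0 ≤ Q :=
    mul_nonneg (inv_nonneg.2 (Nat.cast_nonneg _))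
      (Finset.sum_nonneg fun i _ => sq_nonneg _)
  have hsqrtQ : Real.sqrt Q ≥ κ * s := hRE δ hcone
  have hsqrtQpos : 0 < Real.sqrt Q := lt_of_lt_of_le (by positivity) hsqrtQ
  have hQpos : 0 < Q := by
    by_contra h
    have : Q = 0 := le_antisymm (not_lt.1 h) hQnn
    rw [this, Real.sqrt_zero] at hsqrtQpos
    exact lt_irrefl _ hsqrtQpos
  -- pointwise bound |a i| ≤ M * ((1+c₀)*s)
  have habs : ∀ i, |a i| ≤ M * ((1 + c₀) * s) := by
    intro i
    have hxM : ∀ j, |x i j| ≤ M := by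
      intro j
      rw [hM]
      calc |x i j| ≤ ⨆ j, |x i j| := le_ciSup (f := fun j => |x i j|)
              (Set.Finite.bddAbove (Set.finite_range _)) j
        _ ≤ ⨆ i, ⨆ j, |x i j| :=
            le_ciSup (f := fun i => ⨆ j, |x i j|)
              (Set.Finite.bddAbove (Set.finite_range _)) i
    have h1 : |a i| ≤ ∑ j, |x i j| * |δ j| := by
      calc |a i| ≤ ∑ j, |x i j * δ j| := Finset.abs_sum_le_sum_abs _ _
        _ = ∑ j, |x i j| * |δ j| := by simp [abs_mul]
    have h2 : (∑ j, |x i j| * |δ j|) ≤ M * ∑ j, |δ j| := by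
      rw [Finset.mul_sum]
      exact Finset.sum_le_sum fun j _ => mul_le_mul_of_nonneg_right (hxM j) (abs_nonneg _)
    have h3 : (∑ j, |δ j|) ≤ (1 + c₀) * s := by
      have := Finset.sum_add_sum_compl T fun j => |δ j|
      calc (∑ j, |δ j|) = s + ∑ j ∈ Tᶜ, |δ j| := by rw [← this]
        _ ≤ s + c₀ * s := by linarith [hcone]
        _ = (1 + c₀) * s := by ring
    calc |a i| ≤ M * ∑ j, |δ j| := h1.trans h2
      _ ≤ M * ((1 + c₀) * s) := mul_le_mul_of_nonneg_left h3 hMpos.le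
  set C : ℝ := (N : ℝ)⁻¹ * ∑ i, |a i| ^ 3 with hC
  have hCnn : 0 ≤ C :=
    mul_nonneg (inv_nonneg.2 (Nat.cast_nonneg _))
      (Finset.sum_nonneg fun i _ => by positivity)
  have hCpos : 0 < C := by
    rcases hCnn.lt_or_eq with h | h
    · exact h
    · exfalso
      have hNinv : (0:ℝ) < (N : ℝ)⁻¹ := by positivity
      have hsum0 : (∑ i, |a i| ^ 3) = 0 := by
        have := h.symm
        rw [hC] at this
        rcases mul_eq_zero.1 this with h' | h'
        · exact absurd h' (ne_of_gt hNinv)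
        · exact h'
      have hai : ∀ i : Fin N, a i = 0 := by
        intro i
        have := (Finset.sum_eq_zero_iff_of_nonneg
          (fun i _ => by positivity : ∀ i ∈ Finset.univ, (0:ℝ) ≤ |a i| ^ 3)).1 hsum0 i
          (Finset.mem_univ i)
        exact abs_eq_zero.1 (pow_eq_zero_iff (by norm_num) |>.1 this)
      have : Q = 0 := by
        rw [hQ]
        simp [hai]
      exact absurd this (ne_of_gt hQpos)
  refine ⟨hCpos, ?_⟩
  -- key bound: C ≤ M*(1+c₀)*s * Q
  have hCbound : C ≤ M * ((1 + c₀) * s) * Q := by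
    have hsum : (∑ i, |a i| ^ 3) ≤ M * ((1 + c₀) * s) * ∑ i, a i ^ 2 := by
      rw [Finset.mul_sum]
      apply Finset.sum_le_sum
      intro i _
      have h3 : |a i| ^ 3 = |a i| * a i ^ 2 := by
        rw [← abs_pow, pow_succ, pow_two, abs_mul, abs_mul, mul_comm]
        simp [abs_abs, pow_two, abs_mul]
      rw [h3]
      exact mul_le_mul_of_nonneg_right (habs i) (sq_nonneg _)
    calc C = (N : ℝ)⁻¹ * ∑ i, |a i| ^ 3 := hC
      _ ≤ (N : ℝ)⁻¹ * (M * ((1 + c₀) * s) * ∑ i, a i ^ 2) :=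
          mul_le_mul_of_nonneg_left hsum (by positivity)
      _ = M * ((1 + c₀) * s) * Q := by rw [hQ]; ring
  have hrpow : Q ^ ((3:ℝ)/2) = Q * Real.sqrt Q := by
    rw [show (3:ℝ)/2 = 1 + 1/2 by norm_num, Real.rpow_add hQpos, Real.rpow_one,
      Real.sqrt_eq_rpow]
  have hden : 0 < (1 + c₀) * M := by positivity
  rw [ge_iff_le, div_le_div_iff₀ hden hCpos]
  calc κ * C ≤ κ * (M * ((1 + c₀) * s) * Q) :=
        mul_le_mul_of_nonneg_left hCbound hκ.le
    _ = (κ * s) * Q * ((1 + c₀) * M) := by ring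
    _ ≤ Real.sqrt Q * Q * ((1 + c₀) * M) :=
        mul_le_mul_of_nonneg_right
          (mul_le_mul_of_nonneg_right hsqrtQ hQpos.le) hden.le
    _ = Q ^ ((3:ℝ)/2) * ((1 + c₀) * M) := by rw [hrpow]; ring
end

section
/- (Mean-square contraction of the score around the true nuisance parameter.) Fix θ ∈ ℝ, c₁ > 0, δ > 0. Suppose Y ∈ L²(P), E[(Y − g₀(Z,X))² | X] ≤ c₁ a.s., and let η = (g, m, p) be a nuisance parameter with ε ≤ p(X) ≤ 1 − ε a.s., ‖g(z,X) − g₀(z,X)‖_{P,2} ≤ δ and ‖m(z,X) − m₀(z,X)‖_{P,2} ≤ δ for z ∈ {0,1}, and ‖p(X) − p₀(X)‖_{P,2} ≤ δ. Then ‖ψ(W; θ, η) − ψ(W; θ, η₀)‖_{P,2} ≤ C·δ, where one may take C = (1 + |θ|)·(2 + 2ε^{−2}·(1 + max(√c₁, 1))), a constant depending only on ε, c₁ and |θ|. -/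
/-!
The score is `ψ(η) = aipw(Z, Y, g(1,X), g(0,X), p(X)) - θ aipw(Z, D, m(1,X), m(0,X), p(X))`, so
`ψ(η) - ψ(η₀) = Δ_Y - θ Δ_D`. Writing `a`, `b` for the perturbed and the true regressions of
`V`, on `{Z = 1}` we have `Δ_V = (a₁ - b₁)(1 - 1/p) - (a₀ - b₀) - (V - b₁)(p - p₀)/(p p₀)`,
and symmetrically on `{Z = 0}`, so by overlap each piece is bounded either by `1 + ε⁻¹` times
a nuisance error or by `ε⁻² |(V - b(Z,X))(p - p₀)|`. For `V = D` this residual is at most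
`|p - p₀|`, as `D` is binary and `m₀(Z,X) = E[D | Z,X]`. For `V = Y`, since `p - p₀` is a
bounded function of `X`, conditioning on `X` gives
`‖(Y - g₀(Z,X))(p - p₀)‖₂² ≤ c₁ ‖p - p₀‖₂²`.
-/

open MeasureTheory
open scoped ENNReal

noncomputable def aipw (z v a₁ a₀ q : ℝ) : ℝ :=
  a₁ - a₀ + z * (v - a₁) / q - (1 - z) * (v - a₀) / (1 - q)

lemma aipw_zero (v a₁ a₀ q : ℝ) : aipw 0 v a₁ a₀ q = -aipw 1 v a₀ a₁ (1 - q) := by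
  simp only [aipw]; ring

lemma abs_aipw_one_sub_le {ε q q₀ : ℝ} (v a₁ a₀ b₁ b₀ : ℝ) (hε : 0 < ε) (hq : ε ≤ q)
    (hq₀ : ε ≤ q₀) :
    |aipw 1 v a₁ a₀ q - aipw 1 v b₁ b₀ q₀|
      ≤ (1 + ε⁻¹) * (|a₁ - b₁| + |a₀ - b₀|) + ε⁻¹ ^ 2 * |(v - b₁) * (q - q₀)| := by
  have hq0 : 0 < q := hε.trans_le hq
  have hq₀0 : 0 < q₀ := hε.trans_le hq₀
  have hinv : q⁻¹ ≤ ε⁻¹ := inv_anti₀ hε hq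
  have hinv₀ : q₀⁻¹ ≤ ε⁻¹ := inv_anti₀ hε hq₀
  have hsplit : aipw 1 v a₁ a₀ q - aipw 1 v b₁ b₀ q₀
      = (a₁ - b₁) * (1 - q⁻¹) - (a₀ - b₀) - q⁻¹ * q₀⁻¹ * ((v - b₁) * (q - q₀)) := by
    simp only [aipw]; field_simp; ring
  have hw : |1 - q⁻¹| ≤ 1 + ε⁻¹ := by
    rw [abs_le]; constructor <;> nlinarith [inv_pos.2 hq0]
  have hw₀ : |q⁻¹ * q₀⁻¹| ≤ ε⁻¹ ^ 2 := by
    rw [abs_of_pos (by positivity), sq]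
    exact mul_le_mul hinv hinv₀ (by positivity) (by positivity)
  rw [hsplit]
  calc _ ≤ |(a₁ - b₁) * (1 - q⁻¹) - (a₀ - b₀)| + |q⁻¹ * q₀⁻¹ * ((v - b₁) * (q - q₀))| :=
        abs_sub _ _
    _ ≤ |(a₁ - b₁) * (1 - q⁻¹)| + |a₀ - b₀| + |q⁻¹ * q₀⁻¹ * ((v - b₁) * (q - q₀))| := by
        gcongr; exact abs_sub _ _
    _ = |a₁ - b₁| * |1 - q⁻¹| + |a₀ - b₀| + |q⁻¹ * q₀⁻¹| * |(v - b₁) * (q - q₀)| := by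
        rw [abs_mul, abs_mul]
    _ ≤ |a₁ - b₁| * (1 + ε⁻¹) + |a₀ - b₀| + ε⁻¹ ^ 2 * |(v - b₁) * (q - q₀)| := by gcongr
    _ ≤ _ := by nlinarith [abs_nonneg (a₀ - b₀), inv_pos.2 hε]

lemma abs_aipw_sub_le {ε z q q₀ : ℝ} (v : ℝ) (a b : ℝ → ℝ) (hε : 0 < ε) (hz : z = 0 ∨ z = 1)
    (hq : ε ≤ q ∧ q ≤ 1 - ε) (hq₀ : ε ≤ q₀ ∧ q₀ ≤ 1 - ε) :
    |aipw z v (a 1) (a 0) q - aipw z v (b 1) (b 0) q₀|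
      ≤ (1 + ε⁻¹) * (|a 1 - b 1| + |a 0 - b 0|) + ε⁻¹ ^ 2 * |(v - b z) * (q - q₀)| := by
  rcases hz with rfl | rfl
  · have h := abs_aipw_one_sub_le v (a 0) (a 1) (b 0) (b 1) hε (q := 1 - q) (q₀ := 1 - q₀)
      (by linarith) (by linarith)
    rw [aipw_zero, aipw_zero, neg_sub_neg, abs_sub_comm, add_comm |a 1 - b 1|]
    convert h using 3
    rw [abs_mul, abs_mul, abs_sub_comm q]; ring_nf
  · exact abs_aipw_one_sub_le v _ _ _ _ hε hq.1 hq₀.1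

namespace MeasureTheory

variable {Ω : Type*} {m m₀ : MeasurableSpace Ω} {μ : Measure[m₀] Ω} {p : ℝ≥0∞}

lemma eLpNorm_add_le_ofReal {f g : Ω → ℝ} {a b : ℝ} (hf : AEStronglyMeasurable f μ)
    (hg : AEStronglyMeasurable g μ) (hp : 1 ≤ p) (ha : 0 ≤ a) (hb : 0 ≤ b)
    (hfa : eLpNorm f p μ ≤ ENNReal.ofReal a) (hgb : eLpNorm g p μ ≤ ENNReal.ofReal b) :
    eLpNorm (f + g) p μ ≤ ENNReal.ofReal (a + b) := by
  rw [ENNReal.ofReal_add ha hb]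
  exact (eLpNorm_add_le hf hg hp).trans (add_le_add hfa hgb)

lemma eLpNorm_const_smul_le_ofReal {f : Ω → ℝ} {a : ℝ} (c : ℝ)
    (hfa : eLpNorm f p μ ≤ ENNReal.ofReal a) :
    eLpNorm (c • f) p μ ≤ ENNReal.ofReal (|c| * a) := by
  rw [eLpNorm_const_smul, Real.enorm_eq_ofReal_abs, ENNReal.ofReal_mul (abs_nonneg c)]
  exact mul_le_mul_right hfa _

lemma MemLp.eLpNorm_le_ofReal_iff_integral_sq_le {f : Ω → ℝ} {δ : ℝ} (hf : MemLp f 2 μ)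
    (hδ : 0 ≤ δ) : eLpNorm f 2 μ ≤ ENNReal.ofReal δ ↔ ∫ ω, f ω ^ 2 ∂μ ≤ δ ^ 2 := by
  rw [hf.eLpNorm_eq_integral_rpow_norm two_ne_zero ENNReal.ofNat_ne_top,
    ENNReal.ofReal_le_ofReal_iff hδ, ENNReal.toReal_ofNat, ← one_div, ← Real.sqrt_eq_rpow,
    Real.sqrt_le_left hδ]
  simp only [Real.rpow_two, Real.norm_eq_abs, sq_abs]

lemma ae_abs_sub_condExp_le_one [IsFiniteMeasure μ] (hm : m ≤ m₀) {V : Ω → ℝ}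
    (hV : AEStronglyMeasurable V μ) (hV01 : ∀ᵐ ω ∂μ, V ω ∈ Set.Icc 0 1) :
    ∀ᵐ ω ∂μ, |V ω - μ[V | m] ω| ≤ 1 := by
  have hint : Integrable V μ := .of_bound hV 1 <| hV01.mono fun ω hω => by
    rw [Real.norm_eq_abs, abs_le]; constructor <;> linarith [hω.1, hω.2]
  have hlow : ∀ᵐ ω ∂μ, 0 ≤ μ[V | m] ω := condExp_nonneg (hV01.mono fun _ hω => hω.1)
  have hup : μ[V | m] ≤ᵐ[μ] μ[fun _ => (1 : ℝ) | m] :=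
    condExp_mono hint (integrable_const 1) (hV01.mono fun _ hω => hω.2)
  rw [condExp_const hm] at hup
  filter_upwards [hV01, hlow, hup] with ω hω hlowω hupω
  rw [abs_le]; constructor <;> linarith [hω.1, hω.2, hlowω, hupω]

lemma eLpNorm_mul_le_of_condExp_sq_le [IsFiniteMeasure μ] (hm : m ≤ m₀) {e f : Ω → ℝ}
    {c C δ : ℝ} (hc : 0 ≤ c) (hδ : 0 ≤ δ) (he : MemLp e 2 μ) (hf : StronglyMeasurable[m] f)
    (hfC : ∀ᵐ ω ∂μ, |f ω| ≤ C) (hce : ∀ᵐ ω ∂μ, μ[fun ω => e ω ^ 2 | m] ω ≤ c)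
    (hfδ : eLpNorm f 2 μ ≤ ENNReal.ofReal δ) :
    eLpNorm (fun ω => e ω * f ω) 2 μ ≤ ENNReal.ofReal (√c * δ) := by
  have hf' : AEStronglyMeasurable f μ := (hf.mono hm).aestronglyMeasurable
  have hf2 : MemLp f 2 μ := .of_bound hf' C hfC
  have hf2C : ∀ᵐ ω ∂μ, ‖f ω ^ 2‖ ≤ C ^ 2 := hfC.mono fun ω hω => by
    rw [Real.norm_eq_abs, abs_pow]; exact pow_le_pow_left₀ (abs_nonneg _) hω 2
  have he2 : Integrable (fun ω => e ω ^ 2) μ := he.integrable_sq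
  have hfe2 : Integrable (fun ω => f ω ^ 2 * e ω ^ 2) μ :=
    he2.bdd_mul (hf'.pow 2) hf2C
  have hef : MemLp (fun ω => e ω * f ω) 2 μ :=
    (memLp_two_iff_integrable_sq (he.1.mul hf')).2 <|
      hfe2.congr (.of_forall fun ω => by simp only [Pi.mul_apply]; ring)
  rw [hef.eLpNorm_le_ofReal_iff_integral_sq_le (by positivity), mul_pow √c δ, Real.sq_sqrt hc]
  calc ∫ ω, (e ω * f ω) ^ 2 ∂μ = ∫ ω, μ[fun ω => f ω ^ 2 * e ω ^ 2 | m] ω ∂μ := by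
        rw [integral_condExp hm]; congr with ω; ring
    _ = ∫ ω, f ω ^ 2 * μ[fun ω => e ω ^ 2 | m] ω ∂μ :=
        integral_congr_ae (condExp_mul_of_stronglyMeasurable_left (hf.pow 2) hfe2 he2)
    _ ≤ ∫ ω, c * f ω ^ 2 ∂μ := by
        refine integral_mono_ae (integrable_condExp.bdd_mul (hf'.pow 2) hf2C)
          (hf2.integrable_sq.const_mul c) ?_
        filter_upwards [hce] with ω hω
        rw [mul_comm c]
        exact mul_le_mul_of_nonneg_left hω (sq_nonneg _)
    _ ≤ c * δ ^ 2 := by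
        rw [integral_const_mul]
        exact mul_le_mul_of_nonneg_left ((hf2.eLpNorm_le_ofReal_iff_integral_sq_le hδ).1 hfδ) hc

end MeasureTheory

section

variable {Ω : Type*} [MeasurableSpace Ω] {μ : Measure Ω} {p : ℝ≥0∞}

lemma eLpNorm_aipw_sub_le {z v q q₀ : Ω → ℝ} {a b : ℝ → Ω → ℝ} {ε δ κ : ℝ} (hp : 1 ≤ p)
    (hε : 0 < ε) (hδ : 0 ≤ δ) (hκ : 0 ≤ κ) (hz : ∀ᵐ ω ∂μ, z ω = 0 ∨ z ω = 1)
    (hq : ∀ᵐ ω ∂μ, ε ≤ q ω ∧ q ω ≤ 1 - ε) (hq₀ : ∀ᵐ ω ∂μ, ε ≤ q₀ ω ∧ q₀ ω ≤ 1 - ε)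
    (hm₁ : AEStronglyMeasurable (fun ω => a 1 ω - b 1 ω) μ)
    (hm₀ : AEStronglyMeasurable (fun ω => a 0 ω - b 0 ω) μ)
    (hmr : AEStronglyMeasurable (fun ω => (v ω - b (z ω) ω) * (q ω - q₀ ω)) μ)
    (h₁ : eLpNorm (fun ω => a 1 ω - b 1 ω) p μ ≤ ENNReal.ofReal δ)
    (h₀ : eLpNorm (fun ω => a 0 ω - b 0 ω) p μ ≤ ENNReal.ofReal δ)
    (hr : eLpNorm (fun ω => (v ω - b (z ω) ω) * (q ω - q₀ ω)) p μ ≤ ENNReal.ofReal κ) :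
    eLpNorm (fun ω => aipw (z ω) (v ω) (a 1 ω) (a 0 ω) (q ω)
        - aipw (z ω) (v ω) (b 1 ω) (b 0 ω) (q₀ ω)) p μ
      ≤ ENNReal.ofReal ((1 + ε⁻¹) * (δ + δ) + ε⁻¹ ^ 2 * κ) := by
  set r := fun ω => (v ω - b (z ω) ω) * (q ω - q₀ ω)
  have hpoint : ∀ᵐ ω ∂μ, ‖aipw (z ω) (v ω) (a 1 ω) (a 0 ω) (q ω)
      - aipw (z ω) (v ω) (b 1 ω) (b 0 ω) (q₀ ω)‖
      ≤ ((1 + ε⁻¹) • ((fun ω => ‖a 1 ω - b 1 ω‖) + fun ω => ‖a 0 ω - b 0 ω‖)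
        + (ε⁻¹ ^ 2) • fun ω => ‖r ω‖) ω := by
    filter_upwards [hz, hq, hq₀] with ω hzω hqω hq₀ω
    simpa only [Real.norm_eq_abs, Pi.add_apply, Pi.smul_apply, smul_eq_mul, r] using
      abs_aipw_sub_le (v ω) (a · ω) (b · ω) hε hzω hqω hq₀ω
  refine (eLpNorm_mono_ae_real hpoint).trans ?_
  have hc : 0 ≤ 1 + ε⁻¹ := by positivity
  have := eLpNorm_add_le_ofReal ((hm₁.norm.add hm₀.norm).const_smul (1 + ε⁻¹))
    (hmr.norm.const_smul (ε⁻¹ ^ 2)) hp (by positivity) (by positivity)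
    (eLpNorm_const_smul_le_ofReal _ (eLpNorm_add_le_ofReal hm₁.norm hm₀.norm hp hδ hδ
      ((eLpNorm_norm _).trans_le h₁) ((eLpNorm_norm _).trans_le h₀)))
    (eLpNorm_const_smul_le_ofReal _ ((eLpNorm_norm r).trans_le hr))
  simpa only [abs_of_nonneg hc, abs_of_nonneg (by positivity : (0 : ℝ) ≤ ε⁻¹ ^ 2)] using this

end

lemma score_error_le_constant_mul {ε c δ : ℝ} (θ : ℝ) (hε0 : 0 < ε) (hε1 : ε ≤ 1) (hδ : 0 ≤ δ) :
    (1 + ε⁻¹) * (δ + δ) + ε⁻¹ ^ 2 * (√c * δ) + |-θ| * ((1 + ε⁻¹) * (δ + δ) + ε⁻¹ ^ 2 * δ)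
      ≤ (1 + |θ|) * (2 + 2 * ε ^ (-2 : ℝ) * (1 + max √c 1)) * δ := by
  rw [Real.rpow_neg hε0.le, Real.rpow_two, ← inv_pow, abs_neg]
  set M := max √c 1
  have hinv : ε⁻¹ ≤ ε⁻¹ ^ 2 := by
    nlinarith [(one_le_inv₀ hε0).2 hε1]
  have hW : (1 + ε⁻¹) * (δ + δ) + ε⁻¹ ^ 2 * (M * δ) ≤ (2 + 2 * ε⁻¹ ^ 2 * (1 + M)) * δ := by
    nlinarith [mul_le_mul_of_nonneg_right hinv hδ,
      mul_nonneg (sq_nonneg ε⁻¹) (mul_nonneg (zero_le_one.trans (le_max_right √c 1)) hδ)]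
  have hY : (1 + ε⁻¹) * (δ + δ) + ε⁻¹ ^ 2 * (√c * δ) ≤ (2 + 2 * ε⁻¹ ^ 2 * (1 + M)) * δ :=
    le_trans (by gcongr; exact le_max_left _ _) hW
  have hD : (1 + ε⁻¹) * (δ + δ) + ε⁻¹ ^ 2 * δ ≤ (2 + 2 * ε⁻¹ ^ 2 * (1 + M)) * δ :=
    le_trans (by gcongr; exact le_mul_of_one_le_left hδ (le_max_right _ _)) hW
  nlinarith [mul_le_mul_of_nonneg_left hD (abs_nonneg θ)]

theorem stmt12_general
    {Ω 𝒳 : Type*} [MeasurableSpace Ω] [MeasurableSpace 𝒳]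
    (P : Measure Ω) [IsProbabilityMeasure P]
    (Y D Z : Ω → ℝ) (X : Ω → 𝒳)
    (hYm : Measurable Y) (hDm : Measurable D) (hZm : Measurable Z) (hXm : Measurable X)
    (hDval : ∀ ω, D ω = 0 ∨ D ω = 1) (hZval : ∀ ω, Z ω = 0 ∨ Z ω = 1)
    -- the true nuisance parameter η₀ = (g₀, m₀, p₀)
    (g0 m0 : ℝ → 𝒳 → ℝ) (p0 : 𝒳 → ℝ)
    (hg0m : Measurable (Function.uncurry g0)) (hm0m : Measurable (Function.uncurry m0))
    (hp0m : Measurable p0)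
    (hcY : P[Y | MeasurableSpace.comap (fun ω => (Z ω, X ω)) inferInstance]
        =ᵐ[P] fun ω => g0 (Z ω) (X ω))
    (hcD : P[D | MeasurableSpace.comap (fun ω => (Z ω, X ω)) inferInstance]
        =ᵐ[P] fun ω => m0 (Z ω) (X ω))
    (ε : ℝ) (hε : ε ∈ Set.Ioo (0 : ℝ) (1 / 2))
    (hp0bd : ∀ᵐ ω ∂P, ε ≤ p0 (X ω) ∧ p0 (X ω) ≤ 1 - ε)
    (θ : ℝ) (c₁ δ : ℝ) (hc₁ : 0 < c₁) (hδ : 0 < δ)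
    (hY2 : MemLp Y 2 P)
    (hcondvar : ∀ᵐ ω ∂P,
      (P[fun ω' => (Y ω' - g0 (Z ω') (X ω')) ^ 2 | MeasurableSpace.comap X inferInstance]) ω
        ≤ c₁)
    -- the nuisance parameter η = (g, m, p)
    (g m : ℝ → 𝒳 → ℝ) (p : 𝒳 → ℝ)
    (hgm : Measurable (Function.uncurry g)) (hmm : Measurable (Function.uncurry m))
    (hpm : Measurable p)
    (hpbd : ∀ᵐ ω ∂P, ε ≤ p (X ω) ∧ p (X ω) ≤ 1 - ε)
    (hgd1 : eLpNorm (fun ω => g 1 (X ω) - g0 1 (X ω)) 2 P ≤ ENNReal.ofReal δ)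
    (hgd0 : eLpNorm (fun ω => g 0 (X ω) - g0 0 (X ω)) 2 P ≤ ENNReal.ofReal δ)
    (hmd1 : eLpNorm (fun ω => m 1 (X ω) - m0 1 (X ω)) 2 P ≤ ENNReal.ofReal δ)
    (hmd0 : eLpNorm (fun ω => m 0 (X ω) - m0 0 (X ω)) 2 P ≤ ENNReal.ofReal δ)
    (hpd : eLpNorm (fun ω => p (X ω) - p0 (X ω)) 2 P ≤ ENNReal.ofReal δ)
    -- the AR-type score as a function of the nuisance parameter
    (ψ : (ℝ → 𝒳 → ℝ) → (ℝ → 𝒳 → ℝ) → (𝒳 → ℝ) → Ω → ℝ)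
    (hψ : ∀ (g' m' : ℝ → 𝒳 → ℝ) (p' : 𝒳 → ℝ) (ω : Ω), ψ g' m' p' ω =
      g' 1 (X ω) - g' 0 (X ω)
        + Z ω * (Y ω - g' 1 (X ω)) / p' (X ω)
        - (1 - Z ω) * (Y ω - g' 0 (X ω)) / (1 - p' (X ω))
        - θ * (m' 1 (X ω) - m' 0 (X ω)
            + Z ω * (D ω - m' 1 (X ω)) / p' (X ω)
            - (1 - Z ω) * (D ω - m' 0 (X ω)) / (1 - p' (X ω)))) :
    eLpNorm (fun ω => ψ g m p ω - ψ g0 m0 p0 ω) 2 P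
      ≤ ENNReal.ofReal
          ((1 + |θ|) * (2 + 2 * ε ^ (-2 : ℝ) * (1 + max (Real.sqrt c₁) 1)) * δ) := by
  obtain ⟨hε0, hε1⟩ := hε
  have hZ : ∀ᵐ ω ∂P, Z ω = 0 ∨ Z ω = 1 := .of_forall hZval
  have hΔp : ∀ᵐ ω ∂P, |p (X ω) - p0 (X ω)| ≤ 1 := by
    filter_upwards [hpbd, hp0bd] with ω h h0
    rw [abs_le]; constructor <;> linarith
  have hrY : eLpNorm (fun ω => (Y ω - g0 (Z ω) (X ω)) * (p (X ω) - p0 (X ω))) 2 P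
      ≤ ENNReal.ofReal (√c₁ * δ) :=
    eLpNorm_mul_le_of_condExp_sq_le hXm.comap_le hc₁.le hδ.le
      (hY2.sub ((hY2.condExp one_le_two).ae_eq hcY))
      ((hpm.sub hp0m).comp (comap_measurable X)).stronglyMeasurable hΔp hcondvar hpd
  have hrD : eLpNorm (fun ω => (D ω - m0 (Z ω) (X ω)) * (p (X ω) - p0 (X ω))) 2 P
      ≤ ENNReal.ofReal δ := by
    refine (eLpNorm_mono_ae ?_).trans hpd
    filter_upwards [ae_abs_sub_condExp_le_one (hZm.prodMk hXm).comap_le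
      hDm.aestronglyMeasurable (.of_forall fun ω => by rcases hDval ω with h | h <;> simp [h]),
      hcD] with ω hω hcω
    rw [← hcω, norm_mul]
    exact mul_le_of_le_one_left (norm_nonneg _) hω
  have hYpart := eLpNorm_aipw_sub_le (a := fun z ω => g z (X ω)) (b := fun z ω => g0 z (X ω))
    one_le_two hε0 hδ.le (by positivity) hZ hpbd hp0bd
    (by fun_prop) (by fun_prop) (by fun_prop) hgd1 hgd0 hrY
  have hDpart := eLpNorm_aipw_sub_le (a := fun z ω => m z (X ω)) (b := fun z ω => m0 z (X ω))
    one_le_two hε0 hδ.le hδ.le hZ hpbd hp0bd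
    (by fun_prop) (by fun_prop) (by fun_prop) hmd1 hmd0 hrD
  have hdecomp : (fun ω => ψ g m p ω - ψ g0 m0 p0 ω)
      = (fun ω => aipw (Z ω) (Y ω) (g 1 (X ω)) (g 0 (X ω)) (p (X ω))
          - aipw (Z ω) (Y ω) (g0 1 (X ω)) (g0 0 (X ω)) (p0 (X ω)))
        + (-θ) • fun ω => aipw (Z ω) (D ω) (m 1 (X ω)) (m 0 (X ω)) (p (X ω))
          - aipw (Z ω) (D ω) (m0 1 (X ω)) (m0 0 (X ω)) (p0 (X ω)) := by
    funext ω; simp only [hψ, aipw, Pi.add_apply, Pi.smul_apply, smul_eq_mul]; ring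
  rw [hdecomp]
  refine (eLpNorm_add_le_ofReal (by unfold aipw; fun_prop) (by unfold aipw; fun_prop)
    one_le_two (by positivity) (by positivity) hYpart (eLpNorm_const_smul_le_ofReal _ hDpart)).trans
    (ENNReal.ofReal_le_ofReal (score_error_le_constant_mul θ hε0 (by linarith) hδ.le))

/-- Mean-square contraction of the score around the true nuisance parameter:
Fix `θ ∈ ℝ`, `c₁ > 0`, `δ > 0`. If `Y ∈ L²(P)`, `E[(Y − g₀(Z,X))² | X] ≤ c₁` a.s., and
`η = (g, m, p)` satisfies `ε ≤ p(X) ≤ 1 − ε` a.s., `‖g(z,X) − g₀(z,X)‖_{P,2} ≤ δ`,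
`‖m(z,X) − m₀(z,X)‖_{P,2} ≤ δ` for `z ∈ {0,1}`, and `‖p(X) − p₀(X)‖_{P,2} ≤ δ`, then
`‖ψ(W; θ, η) − ψ(W; θ, η₀)‖_{P,2} ≤ C δ` with
`C = (1 + |θ|)(2 + 2ε⁻²(1 + max(√c₁, 1)))`. -/
theorem stmt12
    {Ω 𝒳 : Type*} [MeasurableSpace Ω] [MeasurableSpace 𝒳]
    (P : Measure Ω) [IsProbabilityMeasure P]
    (Y D Z : Ω → ℝ) (X : Ω → 𝒳)
    (hYm : Measurable Y) (hDm : Measurable D) (hZm : Measurable Z) (hXm : Measurable X)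
    (hDval : ∀ ω, D ω = 0 ∨ D ω = 1) (hZval : ∀ ω, Z ω = 0 ∨ Z ω = 1)
    -- the true nuisance parameter η₀ = (g₀, m₀, p₀)
    (g0 m0 : ℝ → 𝒳 → ℝ) (p0 : 𝒳 → ℝ)
    (hg0m : Measurable (Function.uncurry g0)) (hm0m : Measurable (Function.uncurry m0))
    (hp0m : Measurable p0)
    (hp0val : ∀ x, 0 < p0 x ∧ p0 x < 1)
    (hcY : P[Y | MeasurableSpace.comap (fun ω => (Z ω, X ω)) inferInstance]
        =ᵐ[P] fun ω => g0 (Z ω) (X ω))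
    (hcD : P[D | MeasurableSpace.comap (fun ω => (Z ω, X ω)) inferInstance]
        =ᵐ[P] fun ω => m0 (Z ω) (X ω))
    (hcZ : P[Z | MeasurableSpace.comap X inferInstance] =ᵐ[P] fun ω => p0 (X ω))
    (ε : ℝ) (hε : ε ∈ Set.Ioo (0 : ℝ) (1 / 2))
    (hp0bd : ∀ᵐ ω ∂P, ε ≤ p0 (X ω) ∧ p0 (X ω) ≤ 1 - ε)
    (θ : ℝ) (c₁ δ : ℝ) (hc₁ : 0 < c₁) (hδ : 0 < δ)
    (hY2 : MemLp Y 2 P)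
    (hcondvar : ∀ᵐ ω ∂P,
      (P[fun ω' => (Y ω' - g0 (Z ω') (X ω')) ^ 2 | MeasurableSpace.comap X inferInstance]) ω
        ≤ c₁)
    -- the nuisance parameter η = (g, m, p)
    (g m : ℝ → 𝒳 → ℝ) (p : 𝒳 → ℝ)
    (hgm : Measurable (Function.uncurry g)) (hmm : Measurable (Function.uncurry m))
    (hpm : Measurable p)
    (hpval : ∀ x, 0 < p x ∧ p x < 1)
    (hpbd : ∀ᵐ ω ∂P, ε ≤ p (X ω) ∧ p (X ω) ≤ 1 - ε)
    (hgd1 : eLpNorm (fun ω => g 1 (X ω) - g0 1 (X ω)) 2 P ≤ ENNReal.ofReal δ)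
    (hgd0 : eLpNorm (fun ω => g 0 (X ω) - g0 0 (X ω)) 2 P ≤ ENNReal.ofReal δ)
    (hmd1 : eLpNorm (fun ω => m 1 (X ω) - m0 1 (X ω)) 2 P ≤ ENNReal.ofReal δ)
    (hmd0 : eLpNorm (fun ω => m 0 (X ω) - m0 0 (X ω)) 2 P ≤ ENNReal.ofReal δ)
    (hpd : eLpNorm (fun ω => p (X ω) - p0 (X ω)) 2 P ≤ ENNReal.ofReal δ)
    -- the AR-type score as a function of the nuisance parameter
    (ψ : (ℝ → 𝒳 → ℝ) → (ℝ → 𝒳 → ℝ) → (𝒳 → ℝ) → Ω → ℝ)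
    (hψ : ∀ (g' m' : ℝ → 𝒳 → ℝ) (p' : 𝒳 → ℝ) (ω : Ω), ψ g' m' p' ω =
      g' 1 (X ω) - g' 0 (X ω)
        + Z ω * (Y ω - g' 1 (X ω)) / p' (X ω)
        - (1 - Z ω) * (Y ω - g' 0 (X ω)) / (1 - p' (X ω))
        - θ * (m' 1 (X ω) - m' 0 (X ω)
            + Z ω * (D ω - m' 1 (X ω)) / p' (X ω)
            - (1 - Z ω) * (D ω - m' 0 (X ω)) / (1 - p' (X ω)))) :
    eLpNorm (fun ω => ψ g m p ω - ψ g0 m0 p0 ω) 2 P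
      ≤ ENNReal.ofReal
          ((1 + |θ|) * (2 + 2 * ε ^ (-2 : ℝ) * (1 + max (Real.sqrt c₁) 1)) * δ) :=
  stmt12_general P Y D Z X hYm hDm hZm hXm hDval hZval g0 m0 p0 hg0m hm0m hp0m hcY hcD ε hε hp0bd θ
    c₁ δ hc₁ hδ hY2 hcondvar g m p hgm hmm hpm hpbd hgd1 hgd0 hmd1 hmd0 hpd ψ hψ
end

section
/- (Consistency of the cross-fitted covariance building blocks.) Let 𝒲 be a measurable space, W a 𝒲-valued random element with law P, and φ₀, φ₀′ : 𝒲 → ℝ measurable with E[φ₀(W)⁴]^{1/4} ≤ c₁ and E[φ₀′(W)⁴]^{1/4} ≤ c₁. For each n, let W_{n,1}, …, W_{n,n} be i.i.d. with law P, let T_n be a random element of a measurable space 𝒯_n independent of (W_{n,1}, …, W_{n,n}), and let φ_n, φ_n′ : 𝒲 × 𝒯_n → ℝ be jointly measurable with sup_{t ∈ 𝒯_n} E[φ_n(W,t)⁴]^{1/4} ≤ c₁, sup_{t ∈ 𝒯_n} E[φ_n′(W,t)⁴]^{1/4} ≤ c₁, sup_{t ∈ 𝒯_n} E[(φ_n(W,t)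 − φ₀(W))²] ≤ r_n², and sup_{t ∈ 𝒯_n} E[(φ_n′(W,t) − φ₀′(W))²] ≤ r_n², where r_n → 0. Then n^{−1} Σ_{i=1}^n φ_n(W_{n,i}, T_n) φ_n′(W_{n,i}, T_n) → E[φ₀(W)φ₀′(W)] in probability, and n^{−1} Σ_{i=1}^n φ_n(W_{n,i}, T_n) → E[φ₀(W)] in probability, as n → ∞. -/
/-!
Write `g` for `φ_n φ_n′` or `φ_n`. Conditionally on `T_n = t`, the summands `g(W_{n,i}, t)` are
i.i.d., so Chebyshev's inequality bounds the probability that their mean deviates from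
`E[g(W, t)]` by `ε/2` by `Var/(n (ε/2)²)`, uniformly in `t`; the variances are bounded through
Hölder's inequality by the fourth-moment bounds. By Cauchy–Schwarz, `E[g(W, t)]` lies within
`2 c₁ r_n` (for the products) or `r_n` (for the means) of the target, hence eventually within
`ε/2` of it for every `t`. Independence of `T_n` from the sample lets the slice bound be
integrated over the law of `T_n`.
-/

open MeasureTheory ProbabilityTheory Filter
open scoped ENNReal Topology

section L2

variable {α : Type*} [MeasurableSpace α] {μ : Measure α} {u v : α → ℝ}

lemma eLpNorm_two_sq_eq_ofReal_integral_sq (hu : MemLp u 2 μ) :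
    eLpNorm u 2 μ ^ 2 = ENNReal.ofReal (∫ x, u x ^ 2 ∂μ) := by
  have h := eLpNorm_nnreal_pow_eq_lintegral (f := u) (μ := μ) (p := 2) two_ne_zero
  simp only [NNReal.coe_ofNat, ENNReal.rpow_two, ENNReal.coe_ofNat] at h
  rw [h, ofReal_integral_eq_lintegral_ofReal hu.integrable_sq (.of_forall fun _ => sq_nonneg _)]
  congr 1 with x
  rw [← enorm_pow, Real.enorm_eq_ofReal_abs, abs_pow, sq_abs]

lemma integral_sq_le_sq_of_eLpNorm_two_le (hu : MemLp u 2 μ) {C : ℝ} (hC : 0 ≤ C)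
    (h : eLpNorm u 2 μ ≤ ENNReal.ofReal C) : ∫ x, u x ^ 2 ∂μ ≤ C ^ 2 := by
  rw [← ENNReal.ofReal_le_ofReal_iff (sq_nonneg C), ← eLpNorm_two_sq_eq_ofReal_integral_sq hu,
    ENNReal.ofReal_pow hC]
  gcongr

lemma eLpNorm_two_le_of_integral_sq_le (hu : MemLp u 2 μ) {a : ℝ}
    (h : ∫ x, u x ^ 2 ∂μ ≤ a ^ 2) : eLpNorm u 2 μ ≤ ENNReal.ofReal |a| := by
  rw [← ENNReal.pow_le_pow_left_iff two_ne_zero, eLpNorm_two_sq_eq_ofReal_integral_sq hu,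
    ← ENNReal.ofReal_pow (abs_nonneg a), sq_abs]
  exact ENNReal.ofReal_le_ofReal h

lemma eLpNorm_two_mul_le (hu : AEStronglyMeasurable u μ) (hv : AEStronglyMeasurable v μ) :
    eLpNorm (fun x => u x * v x) 2 μ ≤ eLpNorm u 4 μ * eLpNorm v 4 μ :=
  have : ENNReal.HolderTriple 4 4 2 := ⟨by
    rw [← two_mul, show (4 : ℝ≥0∞) = 2 * 2 by norm_num, ENNReal.mul_inv (by simp) (by simp),
      ← mul_assoc, ENNReal.mul_inv_cancel (by simp) (by simp), one_mul]⟩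
  eLpNorm_smul_le_mul_eLpNorm (φ := u) (f := v) hv hu

lemma abs_integral_mul_le_of_eLpNorm_two_le (hu : AEStronglyMeasurable u μ)
    (hv : AEStronglyMeasurable v μ) {a b : ℝ} (ha : 0 ≤ a) (hb : 0 ≤ b)
    (hua : eLpNorm u 2 μ ≤ ENNReal.ofReal a) (hvb : eLpNorm v 2 μ ≤ ENNReal.ofReal b) :
    |∫ x, u x * v x ∂μ| ≤ a * b := by
  rw [← ENNReal.ofReal_le_ofReal_iff (mul_nonneg ha hb), ← Real.enorm_eq_ofReal_abs,
    ENNReal.ofReal_mul ha]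
  calc ‖∫ x, u x * v x ∂μ‖ₑ ≤ eLpNorm (fun x => u x * v x) 1 μ := by
        rw [eLpNorm_one_eq_lintegral_enorm]
        exact enorm_integral_le_lintegral_enorm _
    _ ≤ eLpNorm u 2 μ * eLpNorm v 2 μ := eLpNorm_smul_le_mul_eLpNorm (φ := u) (f := v) hv hu
    _ ≤ ENNReal.ofReal a * ENNReal.ofReal b := by gcongr

lemma abs_integral_sub_integral_le_of_eLpNorm_two_sub_le [IsProbabilityMeasure μ] {f f₀ : α → ℝ}
    (hf : MemLp f 2 μ) (hf₀ : MemLp f₀ 2 μ) {r : ℝ} (hr : 0 ≤ r)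
    (h : eLpNorm (f - f₀) 2 μ ≤ ENNReal.ofReal r) :
    |∫ x, f x ∂μ - ∫ x, f₀ x ∂μ| ≤ r := by
  rw [← integral_sub (hf.integrable one_le_two) (hf₀.integrable one_le_two)]
  simpa using abs_integral_mul_le_of_eLpNorm_two_le (hf.sub hf₀).1 aestronglyMeasurable_const
    hr zero_le_one h (v := fun _ => 1)
    (by simp [eLpNorm_const _ two_ne_zero (IsProbabilityMeasure.ne_zero μ)])

lemma abs_integral_mul_sub_integral_mul_le {f g f₀ g₀ : α → ℝ} (hf : MemLp f 2 μ)
    (hg : MemLp g 2 μ) (hf₀ : MemLp f₀ 2 μ) (hg₀ : MemLp g₀ 2 μ) {c r : ℝ} (hc : 0 ≤ c)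
    (hr : 0 ≤ r) (hgc : eLpNorm g 2 μ ≤ ENNReal.ofReal c) (hf₀c : eLpNorm f₀ 2 μ ≤ ENNReal.ofReal c)
    (hff₀ : eLpNorm (f - f₀) 2 μ ≤ ENNReal.ofReal r)
    (hgg₀ : eLpNorm (g - g₀) 2 μ ≤ ENNReal.ofReal r) :
    |∫ x, f x * g x ∂μ - ∫ x, f₀ x * g₀ x ∂μ| ≤ 2 * c * r := by
  have hsplit : ∫ x, f x * g x ∂μ - ∫ x, f₀ x * g₀ x ∂μ
      = ∫ x, (f - f₀) x * g x ∂μ + ∫ x, f₀ x * (g - g₀) x ∂μ := by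
    have hfg : Integrable (fun x => f x * g x) μ := hf.integrable_mul hg
    have hfg₀ : Integrable (fun x => f₀ x * g₀ x) μ := hf₀.integrable_mul hg₀
    have hδf : Integrable (fun x => (f - f₀) x * g x) μ := (hf.sub hf₀).integrable_mul hg
    have hδg : Integrable (fun x => f₀ x * (g - g₀) x) μ := hf₀.integrable_mul (hg.sub hg₀)
    rw [← integral_sub hfg hfg₀, ← integral_add hδf hδg]
    congr 1 with x
    simp only [Pi.sub_apply]
    ring
  rw [hsplit]
  calc _ ≤ |∫ x, (f - f₀) x * g x ∂μ| + |∫ x, f₀ x * (g - g₀) x ∂μ| := abs_add_le _ _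
    _ ≤ r * c + c * r := by
      gcongr
      · exact abs_integral_mul_le_of_eLpNorm_two_le (hf.sub hf₀).1 hg.1 hr hc hff₀ hgc
      · exact abs_integral_mul_le_of_eLpNorm_two_le hf₀.1 (hg.sub hg₀).1 hc hr hf₀c hgg₀
    _ = 2 * c * r := by ring

end L2

section Sampling

variable {𝒲 : Type*} [MeasurableSpace 𝒲]

lemma measure_pi_abs_sampleMean_sub_integral_ge_le {ν : Measure 𝒲} [IsProbabilityMeasure ν]
    {g : 𝒲 → ℝ} (hg : MemLp g 2 ν) {n : ℕ} (hn : n ≠ 0) {δ : ℝ} (hδ : 0 < δ) :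
    Measure.pi (fun _ : Fin n => ν) {w | δ ≤ |(n : ℝ)⁻¹ * ∑ i, g (w i) - ∫ x, g x ∂ν|}
      ≤ ENNReal.ofReal (Var[g; ν] / (n * δ ^ 2)) := by
  set P := Measure.pi fun _ : Fin n => ν
  set M : (Fin n → 𝒲) → ℝ := fun w => (n : ℝ)⁻¹ * ∑ i, g (w i) with hM_def
  have hgi : ∀ i : Fin n, MemLp (fun w : Fin n → 𝒲 => g (w i)) 2 P := fun i =>
    hg.comp_measurePreserving (measurePreserving_eval _ i)
  have hM : MemLp M 2 P := (memLp_finsetSum _ fun i _ => hgi i).const_mul _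
  have hmean : P[M] = ∫ x, g x ∂ν := by
    have hcoord : ∀ i, ∫ w, g (w i) ∂P = ∫ x, g x ∂ν := fun i =>
      integral_comp_eval (μ := fun _ => ν) hg.1
    rw [hM_def, integral_const_mul, integral_finsetSum _ fun i _ => (hgi i).integrable one_le_two,
      Finset.sum_congr rfl fun i _ => hcoord i]
    simp [hn]
  have hvar : Var[M; P] = Var[g; ν] / n := by
    have hsum := variance_sum_pi (μ := fun _ : Fin n => ν) (X := fun _ => g) fun _ => hg
    rw [Finset.sum_fn] at hsum
    rw [hM_def, variance_const_mul, hsum]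
    simp only [inv_pow, Finset.sum_const, Finset.card_univ, Fintype.card_fin, nsmul_eq_mul]
    field_simp
  calc P {w | δ ≤ |M w - ∫ x, g x ∂ν|} = P {w | δ ≤ |M w - P[M]|} := by rw [hmean]
    _ ≤ ENNReal.ofReal (Var[M; P] / δ ^ 2) := meas_ge_le_variance_div_sq hM hδ
    _ = ENNReal.ofReal (Var[g; ν] / (n * δ ^ 2)) := by rw [hvar, div_div]

variable {Ω 𝒯 : Type*} [MeasurableSpace Ω] [MeasurableSpace 𝒯] {μ : Measure Ω}
  [IsProbabilityMeasure μ]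

lemma ProbabilityTheory.IndepFun.measure_le_of_forall_slice_le {α β : Type*}
    [MeasurableSpace α] [MeasurableSpace β] {X : Ω → α} {Y : Ω → β} (hXY : IndepFun X Y μ)
    (hX : Measurable X) (hY : Measurable Y)
    {S : Set (α × β)} (hS : MeasurableSet S) {b : ℝ≥0∞}
    (h : ∀ y, μ.map X {x | (x, y) ∈ S} ≤ b) : μ {ω | (X ω, Y ω) ∈ S} ≤ b := by
  have : IsProbabilityMeasure (μ.map Y) := Measure.isProbabilityMeasure_map hY.aemeasurable
  calc μ {ω | (X ω, Y ω) ∈ S} = ((μ.map X).prod (μ.map Y)) S := by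
        rw [← (indepFun_iff_map_prod_eq_prod_map_map hX.aemeasurable hY.aemeasurable).1 hXY,
          Measure.map_apply (hX.prodMk hY) hS]
        rfl
    _ = ∫⁻ y, μ.map X {x | (x, y) ∈ S} ∂μ.map Y := Measure.prod_apply_symm hS
    _ ≤ ∫⁻ _, b ∂μ.map Y := lintegral_mono h
    _ = b := by simp

lemma measure_abs_sampleMean_sub_gt_le {ν : Measure 𝒲} [IsProbabilityMeasure ν] {n : ℕ}
    (hn : n ≠ 0) {X : Fin n → Ω → 𝒲} {T : Ω → 𝒯} (hX : ∀ i, Measurable (X i))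
    (hT : Measurable T) (hiid : iIndepFun X μ) (hlaw : ∀ i, μ.map (X i) = ν)
    (hindep : IndepFun (fun ω i => X i ω) T μ) {g : 𝒲 → 𝒯 → ℝ}
    (hg : Measurable (Function.uncurry g)) {C : ℝ} (hC : 0 ≤ C)
    (hg2 : ∀ t, eLpNorm (g · t) 2 ν ≤ ENNReal.ofReal C) {m ε : ℝ} (hε : 0 < ε)
    (hbias : ∀ t, |∫ w, g w t ∂ν - m| ≤ ε / 2) :
    μ {ω | ε < |(n : ℝ)⁻¹ * ∑ i, g (X i ω) (T ω) - m|}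
      ≤ ENNReal.ofReal (C ^ 2 / (n * (ε / 2) ^ 2)) := by
  have hpi : μ.map (fun ω i => X i ω) = Measure.pi fun _ => ν := by
    rw [hiid.map_fun_eq_pi_map fun i => (hX i).aemeasurable]
    simp_rw [hlaw]
  refine hindep.measure_le_of_forall_slice_le (measurable_pi_lambda _ hX) hT
    (S := {p | ε < |(n : ℝ)⁻¹ * ∑ i, g (p.1 i) p.2 - m|}) ?_ fun t => ?_
  · exact measurableSet_lt measurable_const (by fun_prop)
  have hgt : MemLp (g · t) 2 ν :=
    ⟨(hg.comp (measurable_id.prodMk measurable_const)).aestronglyMeasurable,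
      (hg2 t).trans_lt ENNReal.ofReal_lt_top⟩
  rw [hpi]
  calc _ ≤ Measure.pi (fun _ => ν)
        {w | ε / 2 ≤ |(n : ℝ)⁻¹ * ∑ i, g (w i) t - ∫ x, g x t ∂ν|} := by
        refine measure_mono fun w hw => ?_
        have := abs_sub_abs_le_abs_sub ((n : ℝ)⁻¹ * ∑ i, g (w i) t - m) (∫ x, g x t ∂ν - m)
        simp only [Set.mem_ofPred_eq, sub_sub_sub_cancel_right] at hw this ⊢
        linarith [hbias t]
    _ ≤ ENNReal.ofReal (Var[(g · t); ν] / (n * (ε / 2) ^ 2)) :=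
        measure_pi_abs_sampleMean_sub_integral_ge_le hgt hn (by positivity)
    _ ≤ ENNReal.ofReal (C ^ 2 / (n * (ε / 2) ^ 2)) := by
        gcongr
        exact (variance_le_expectation_sq hgt.1).trans
          (integral_sq_le_sq_of_eLpNorm_two_le hgt hC (hg2 t))

theorem tendsto_measure_abs_sampleMean_sub_gt {𝒯 : ℕ → Type*} [∀ n, MeasurableSpace (𝒯 n)]
    {W : Ω → 𝒲} (hW : Measurable W) {Ws : (n : ℕ) → Fin n → Ω → 𝒲} {T : (n : ℕ) → Ω → 𝒯 n}
    (hWs : ∀ n i, Measurable (Ws n i)) (hT : ∀ n, Measurable (T n))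
    (hiid : ∀ n, iIndepFun (Ws n) μ) (hlaw : ∀ n i, μ.map (Ws n i) = μ.map W)
    (hindep : ∀ n, IndepFun (fun ω i => Ws n i ω) (T n) μ)
    {g : (n : ℕ) → 𝒲 → 𝒯 n → ℝ} (hg : ∀ n, Measurable (Function.uncurry (g n)))
    {C : ℝ} (hC : 0 ≤ C) (hg2 : ∀ n t, eLpNorm (fun ω => g n (W ω) t) 2 μ ≤ ENNReal.ofReal C)
    {m : ℝ} {β : ℕ → ℝ} (hβ : Tendsto β atTop (𝓝 0))
    (hbias : ∀ n t, |∫ ω, g n (W ω) t ∂μ - m| ≤ β n) {ε : ℝ} (hε : 0 < ε) :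
    Tendsto (fun n : ℕ => (μ {ω | ε < |(n : ℝ)⁻¹ * ∑ i, g n (Ws n i ω) (T n ω) - m|}).toReal)
      atTop (𝓝 0) := by
  have : IsProbabilityMeasure (μ.map W) := Measure.isProbabilityMeasure_map hW.aemeasurable
  have hgt : ∀ n t, Measurable (g n · t) := fun n t =>
    (hg n).comp (measurable_id.prodMk measurable_const)
  have hbound : ∀ᶠ n : ℕ in atTop,
      (μ {ω | ε < |(n : ℝ)⁻¹ * ∑ i, g n (Ws n i ω) (T n ω) - m|}).toReal
        ≤ C ^ 2 / (ε / 2) ^ 2 * (n : ℝ)⁻¹ := by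
    filter_upwards [eventually_ne_atTop 0, hβ.eventually (eventually_le_nhds (half_pos hε))]
      with n hn hβn
    refine ENNReal.toReal_le_of_le_ofReal (by positivity)
      ((measure_abs_sampleMean_sub_gt_le hn (hWs n) (hT n) (hiid n) (hlaw n) (hindep n) (hg n) hC
        (fun t => ?_) hε fun t => ?_).trans_eq ?_)
    · rw [eLpNorm_map_measure (hgt n t).aestronglyMeasurable hW.aemeasurable]
      exact hg2 n t
    · rw [integral_map hW.aemeasurable (hgt n t).aestronglyMeasurable]
      exact (hbias n t).trans hβn
    · field_simp
  refine squeeze_zero' (.of_forall fun _ => ENNReal.toReal_nonneg) hbound ?_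
  simpa only [mul_zero] using
    (tendsto_inv_atTop_nhds_zero_nat (𝕜 := ℝ)).const_mul (C ^ 2 / (ε / 2) ^ 2)

end Sampling

/-- Consistency of the cross-fitted covariance building blocks: Under fourth-moment
bounds `E[φ₀(W)⁴]^{1/4} ≤ c₁`, `E[φ₀′(W)⁴]^{1/4} ≤ c₁`, `sup_t E[φ_n(W,t)⁴]^{1/4} ≤ c₁`,
`sup_t E[φ_n′(W,t)⁴]^{1/4} ≤ c₁`, and mean-square approximation rates
`sup_t E[(φ_n(W,t) − φ₀(W))²] ≤ r_n²`, `sup_t E[(φ_n′(W,t) − φ₀′(W))²] ≤ r_n²` with `r_n → 0`,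
one has `n⁻¹ Σᵢ φ_n(W_{n,i}, T_n) φ_n′(W_{n,i}, T_n) → E[φ₀(W)φ₀′(W)]` and
`n⁻¹ Σᵢ φ_n(W_{n,i}, T_n) → E[φ₀(W)]` in probability. -/
theorem stmt14
    {Ω 𝒲 : Type*} [MeasurableSpace Ω] [MeasurableSpace 𝒲]
    (μ : Measure Ω) [IsProbabilityMeasure μ]
    (𝒯 : ℕ → Type*) [∀ n, MeasurableSpace (𝒯 n)]
    (W : Ω → 𝒲) (hWm : Measurable W)
    (φ0 φ0' : 𝒲 → ℝ) (hφ0m : Measurable φ0) (hφ0'm : Measurable φ0')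
    (c₁ : ℝ) (hc₁ : 0 < c₁)
    (hφ04 : eLpNorm (fun ω => φ0 (W ω)) 4 μ ≤ ENNReal.ofReal c₁)
    (hφ0'4 : eLpNorm (fun ω => φ0' (W ω)) 4 μ ≤ ENNReal.ofReal c₁)
    (Ws : (n : ℕ) → Fin n → Ω → 𝒲) (T : (n : ℕ) → Ω → 𝒯 n)
    (hWsm : ∀ n i, Measurable (Ws n i)) (hTm : ∀ n, Measurable (T n))
    (hiid : ∀ n, iIndepFun (Ws n) μ)
    (hlaw : ∀ n i, μ.map (Ws n i) = μ.map W)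
    (hindep : ∀ n, IndepFun (fun ω i => Ws n i ω) (T n) μ)
    (φ φ' : (n : ℕ) → 𝒲 → 𝒯 n → ℝ)
    (hφm : ∀ n, Measurable (fun wt : 𝒲 × 𝒯 n => φ n wt.1 wt.2))
    (hφ'm : ∀ n, Measurable (fun wt : 𝒲 × 𝒯 n => φ' n wt.1 wt.2))
    (hφ4 : ∀ n t, eLpNorm (fun ω => φ n (W ω) t) 4 μ ≤ ENNReal.ofReal c₁)
    (hφ'4 : ∀ n t, eLpNorm (fun ω => φ' n (W ω) t) 4 μ ≤ ENNReal.ofReal c₁)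
    (r : ℕ → ℝ) (hr : Tendsto r atTop (nhds 0))
    (hrate : ∀ n t, ∫ ω, (φ n (W ω) t - φ0 (W ω)) ^ 2 ∂μ ≤ (r n) ^ 2)
    (hrate' : ∀ n t, ∫ ω, (φ' n (W ω) t - φ0' (W ω)) ^ 2 ∂μ ≤ (r n) ^ 2) :
    (∀ ε > (0 : ℝ),
      Tendsto (fun n : ℕ =>
          (μ {ω | ε < |(n : ℝ)⁻¹ * (∑ i : Fin n, φ n (Ws n i ω) (T n ω) * φ' n (Ws n i ω) (T n ω))
              - ∫ ω', φ0 (W ω') * φ0' (W ω') ∂μ|}).toReal)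
        atTop (nhds 0)) ∧
    (∀ ε > (0 : ℝ),
      Tendsto (fun n : ℕ =>
          (μ {ω | ε < |(n : ℝ)⁻¹ * (∑ i : Fin n, φ n (Ws n i ω) (T n ω))
              - ∫ ω', φ0 (W ω') ∂μ|}).toReal)
        atTop (nhds 0)) := by
  have hφW : ∀ n t, Measurable fun ω => φ n (W ω) t := fun n t =>
    (hφm n).comp (hWm.prodMk measurable_const)
  have hφ'W : ∀ n t, Measurable fun ω => φ' n (W ω) t := fun n t =>
    (hφ'm n).comp (hWm.prodMk measurable_const)
  have hL2 : ∀ {u : Ω → ℝ}, Measurable u → eLpNorm u 4 μ ≤ ENNReal.ofReal c₁ →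
      eLpNorm u 2 μ ≤ ENNReal.ofReal c₁ := fun hu h =>
    (eLpNorm_le_eLpNorm_of_exponent_le (by norm_num) hu.aestronglyMeasurable).trans h
  have hMemLp : ∀ {u : Ω → ℝ}, Measurable u → eLpNorm u 4 μ ≤ ENNReal.ofReal c₁ → MemLp u 2 μ :=
    fun hu h => ⟨hu.aestronglyMeasurable, (hL2 hu h).trans_lt ENNReal.ofReal_lt_top⟩
  have hφ2 := fun n t => hMemLp (hφW n t) (hφ4 n t)
  have hφ'2 := fun n t => hMemLp (hφ'W n t) (hφ'4 n t)
  have hφ02 := hMemLp (hφ0m.comp hWm) hφ04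
  have hφ0'2 := hMemLp (hφ0'm.comp hWm) hφ0'4
  have hr' : Tendsto (fun n => |r n|) atTop (𝓝 0) := by simpa using hr.abs
  refine ⟨fun ε hε => ?_, fun ε hε => ?_⟩
  · refine tendsto_measure_abs_sampleMean_sub_gt hWm hWsm hTm hiid hlaw hindep
      (g := fun n w t => φ n w t * φ' n w t) (fun n => (hφm n).mul (hφ'm n)) (sq_nonneg c₁)
      (fun n t => ?_) (by simpa using hr'.const_mul (2 * c₁)) (fun n t => ?_) hε
    · rw [sq, ENNReal.ofReal_mul hc₁.le]
      exact (eLpNorm_two_mul_le (hφW n t).aestronglyMeasurable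
        (hφ'W n t).aestronglyMeasurable).trans (mul_le_mul' (hφ4 n t) (hφ'4 n t))
    · exact abs_integral_mul_sub_integral_mul_le (hφ2 n t) (hφ'2 n t) hφ02 hφ0'2 hc₁.le
        (abs_nonneg _) (hL2 (hφ'W n t) (hφ'4 n t)) (hL2 (hφ0m.comp hWm) hφ04)
        (eLpNorm_two_le_of_integral_sq_le ((hφ2 n t).sub hφ02) (hrate n t))
        (eLpNorm_two_le_of_integral_sq_le ((hφ'2 n t).sub hφ0'2) (hrate' n t))
  · exact tendsto_measure_abs_sampleMean_sub_gt hWm hWsm hTm hiid hlaw hindep (g := φ) hφm hc₁.le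
      (fun n t => hL2 (hφW n t) (hφ4 n t)) hr' (fun n t =>
        abs_integral_sub_integral_le_of_eLpNorm_two_sub_le (hφ2 n t) hφ02 (abs_nonneg _)
          (eLpNorm_two_le_of_integral_sq_le ((hφ2 n t).sub hφ02) (hrate n t))) hε
end
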